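/- arXiv:2602.15754 — 10 statements merged into one kernel-verified Lean document; each statement's English description precedes it below -/
import Mathlib

section
/- For every monoid H, the reduced finitary power monoid P_{fin,1}(H) is Dedekind-finite, its only unit is the identity {1_H}, it satisfies the ACC on principal two-sided ideals, and it is factorable. -/
/-!
Multiplying by a set that contains `1` can only enlarge a set, so in `P_{fin,1}(H)` every
two-sided divisor of `Y` is a subset of `Y` and every proper divisor a proper subset.
Hence `X * Y = {1}` forces `X = Y = {1}`, and the cardinality strictly decreases along
proper divisors. The proper-divisor relation is therefore well-founded, which is exactly the
ACC on principal two-sided ideals and, by well-founded induction, yields factorizations into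
irreducibles.
-/

open scoped Pointwise

/-- Two-sided divisibility in a monoid: `x` divides `y` if `y = u * x * v` for some `u, v`. -/
def DvdTS {M : Type*} [Monoid M] (x y : M) : Prop := ∃ u v : M, y = u * x * v

/-- A unit-divisor is a divisor of the identity. -/
def IsUnitDivisor {M : Type*} [Monoid M] (x : M) : Prop := DvdTS x 1

/-- `x` is a proper divisor of `y` if `x` divides `y` but `y` does not divide `x`. -/
def IsProperDivisorTS {M : Type*} [Monoid M] (x y : M) : Prop := DvdTS x y ∧ ¬ DvdTS y x

/-- An atom is a non-unit that is not a product of two non-units. -/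
def IsAtomTS {M : Type*} [Monoid M] (a : M) : Prop :=
  ¬ IsUnit a ∧ ∀ b c : M, a = b * c → IsUnit b ∨ IsUnit c

/-- A quark is a non-unit-divisor all of whose proper divisors are unit-divisors. -/
def IsQuarkTS {M : Type*} [Monoid M] (a : M) : Prop :=
  ¬ IsUnitDivisor a ∧ ∀ b : M, IsProperDivisorTS b a → IsUnitDivisor b

/-- An irreducible is a non-unit-divisor with no factorization `a = b * c` into proper
divisors that are not unit-divisors. -/
def IsIrredTS {M : Type*} [Monoid M] (a : M) : Prop :=
  ¬ IsUnitDivisor a ∧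
    ¬ ∃ b c : M, a = b * c ∧ IsProperDivisorTS b a ∧ IsProperDivisorTS c a ∧
      ¬ IsUnitDivisor b ∧ ¬ IsUnitDivisor c

def DedekindFiniteM (M : Type*) [Monoid M] : Prop := ∀ x y : M, x * y = 1 → y * x = 1

/-- ACC on principal two-sided ideals: no infinite sequence of consecutive proper divisors. -/
def ACCPrincipalTS (M : Type*) [Monoid M] : Prop :=
  ¬ ∃ f : ℕ → M, ∀ n : ℕ, IsProperDivisorTS (f (n + 1)) (f n)

/-- Factorable: every non-unit-divisor is a (non-empty) product of irreducibles. -/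
def FactorableM (M : Type*) [Monoid M] : Prop :=
  ∀ x : M, ¬ IsUnitDivisor x →
    ∃ l : List M, l ≠ [] ∧ (∀ a ∈ l, IsIrredTS a) ∧ l.prod = x

/-- Atomic: every non-unit-divisor is a (non-empty) product of atoms. -/
def AtomicM (M : Type*) [Monoid M] : Prop :=
  ∀ x : M, ¬ IsUnitDivisor x →
    ∃ l : List M, l ≠ [] ∧ (∀ a ∈ l, IsAtomTS a) ∧ l.prod = x

/-- The finitary power monoid: non-empty finite subsets of `H` under setwise multiplication. -/
def PfinM (H : Type*) [Monoid H] : Submonoid (Set H) where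
  carrier := {X : Set H | X.Finite ∧ X.Nonempty}
  mul_mem' := fun hX hY => ⟨hX.1.mul hY.1, hX.2.mul hY.2⟩
  one_mem' := ⟨Set.finite_one, 1, Set.mem_one.mpr rfl⟩

/-- The restricted finitary power monoid: non-empty finite subsets of `H` containing a unit. -/
def PfinTimes (H : Type*) [Monoid H] : Submonoid (Set H) where
  carrier := {X : Set H | X.Finite ∧ ∃ u ∈ X, IsUnit u}
  mul_mem' := by
    rintro X Y ⟨hXf, u, hu, hu'⟩ ⟨hYf, v, hv, hv'⟩
    exact ⟨hXf.mul hYf, u * v, Set.mul_mem_mul hu hv, hu'.mul hv'⟩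
  one_mem' := ⟨Set.finite_one, 1, Set.mem_one.mpr rfl, isUnit_one⟩

/-- The reduced finitary power monoid: finite subsets of `H` containing `1`. -/
def PfinOne (H : Type*) [Monoid H] : Submonoid (Set H) where
  carrier := {X : Set H | X.Finite ∧ (1 : H) ∈ X}
  mul_mem' := by
    rintro X Y ⟨hXf, hX1⟩ ⟨hYf, hY1⟩
    exact ⟨hXf.mul hYf, by simpa using Set.mul_mem_mul hX1 hY1⟩
  one_mem' := ⟨Set.finite_one, Set.mem_one.mpr rfl⟩

lemma mem_PfinM {H : Type*} [Monoid H] {X : Set H} :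
    X ∈ PfinM H ↔ X.Finite ∧ X.Nonempty := Iff.rfl

lemma mem_PfinTimes {H : Type*} [Monoid H] {X : Set H} :
    X ∈ PfinTimes H ↔ X.Finite ∧ ∃ u ∈ X, IsUnit u := Iff.rfl

lemma mem_PfinOne {H : Type*} [Monoid H] {X : Set H} :
    X ∈ PfinOne H ↔ X.Finite ∧ (1 : H) ∈ X := Iff.rfl

/-- Acyclic: `u * x * v ≠ x` whenever `u` or `v` is a non-unit. -/
def AcyclicM (M : Type*) [Monoid M] : Prop :=
  ∀ u v x : M, (¬ IsUnit u ∨ ¬ IsUnit v) → u * x * v ≠ x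

/-- Unit-cancellative: `x * y ≠ x ≠ y * x` whenever `y` is a non-unit. -/
def UnitCancellativeM (M : Type*) [Monoid M] : Prop :=
  ∀ x y : M, ¬ IsUnit y → x * y ≠ x ∧ y * x ≠ x

/-- Strongly unit-cancellative: `x * y ≠ x ≠ y * x` whenever `y ≠ 1`. -/
def StrongUnitCancellativeM (M : Type*) [Monoid M] : Prop :=
  ∀ x y : M, y ≠ 1 → x * y ≠ x ∧ y * x ≠ x

/-- Torsion-free: the identity is the only element with finitely many powers. -/
def TorsionFreeM (M : Type*) [Monoid M] : Prop :=
  ∀ x : M, (Set.range fun k : ℕ => x ^ k).Finite → x = 1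

/-- Cancellative monoid. -/
def CancellativeM (M : Type*) [Monoid M] : Prop :=
  ∀ a x y : M, (a * x = a * y → x = y) ∧ (x * a = y * a → x = y)

/-- The set of lengths of (irreducible) factorizations of `x`, with the conventions
`L(1) = {0}` and `L(u) = ∅` for a unit-divisor `u ≠ 1`. -/
def LengthSet {M : Type*} [Monoid M] (x : M) : Set ℕ :=
  {n | (x = 1 ∧ n = 0) ∨
    (¬ IsUnitDivisor x ∧
      ∃ l : List M, l.length = n ∧ l ≠ [] ∧ (∀ a ∈ l, IsIrredTS a) ∧ l.prod = x)}

/-- The system of lengths: the family of non-empty length sets. -/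
def SystemOfLengths (M : Type*) [Monoid M] : Set (Set ℕ) :=
  {L | L.Nonempty ∧ ∃ x : M, LengthSet x = L}

section ProperDivisor

variable {M : Type*} [Monoid M]

theorem accPrincipalTS_iff_wellFounded :
    ACCPrincipalTS M ↔ WellFounded (IsProperDivisorTS (M := M)) := by
  rw [wellFounded_iff_isEmpty_descending_chain, isEmpty_subtype, ACCPrincipalTS, not_exists]

theorem factorableM_of_wellFounded (hwf : WellFounded (IsProperDivisorTS (M := M))) :
    FactorableM M := by
  intro x
  induction x using hwf.induction with
  | _ x ih =>
  intro hx
  by_cases hirr : IsIrredTS x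
  · exact ⟨[x], by simp, by simpa using hirr, by simp⟩
  obtain ⟨b, c, rfl, hb, hc, hb1, hc1⟩ :
      ∃ b c : M, x = b * c ∧ IsProperDivisorTS b x ∧ IsProperDivisorTS c x ∧
        ¬ IsUnitDivisor b ∧ ¬ IsUnitDivisor c := by
    simpa [IsIrredTS, hx] using hirr
  obtain ⟨lb, hlb, hlb_irr, rfl⟩ := ih b hb hb1
  obtain ⟨lc, -, hlc_irr, rfl⟩ := ih c hc hc1
  refine ⟨lb ++ lc, by simp [hlb], fun a ha => ?_, List.prod_append⟩
  exact (List.mem_append.1 ha).elim (hlb_irr a) (hlc_irr a)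

end ProperDivisor

namespace PfinOne

variable {H : Type*} [Monoid H]

theorem subset_mul_right (X Y : PfinOne H) : (X : Set H) ⊆ ((X * Y : PfinOne H) : Set H) :=
  fun x hx => by simpa using Set.mul_mem_mul hx Y.2.2

theorem subset_mul_left (X Y : PfinOne H) : (Y : Set H) ⊆ ((X * Y : PfinOne H) : Set H) :=
  fun y hy => by simpa using Set.mul_mem_mul X.2.2 hy

theorem subset_of_dvdTS {X Y : PfinOne H} (h : DvdTS X Y) : (X : Set H) ⊆ Y := by
  obtain ⟨u, v, rfl⟩ := h
  exact (subset_mul_left u X).trans (subset_mul_right (u * X) v)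

theorem ssubset_of_isProperDivisorTS {X Y : PfinOne H} (h : IsProperDivisorTS X Y) :
    (X : Set H) ⊂ Y := by
  refine (subset_of_dvdTS h.1).ssubset_of_ne fun hXY => h.2 ?_
  rw [Subtype.ext hXY]
  exact ⟨1, 1, by simp⟩

theorem eq_one_of_subset_one {X : PfinOne H} (h : (X : Set H) ⊆ ((1 : PfinOne H) : Set H)) :
    X = 1 :=
  Subtype.ext <| h.antisymm <| Set.singleton_subset_iff.2 X.2.2

theorem mul_eq_one_iff {X Y : PfinOne H} : X * Y = 1 ↔ X = 1 ∧ Y = 1 := by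
  refine ⟨fun h => ⟨?_, ?_⟩, fun ⟨hX, hY⟩ => by rw [hX, hY, mul_one]⟩
  · exact eq_one_of_subset_one (h ▸ subset_mul_right X Y)
  · exact eq_one_of_subset_one (h ▸ subset_mul_left X Y)

theorem wellFounded_isProperDivisorTS : WellFounded (IsProperDivisorTS (M := PfinOne H)) :=
  Subrelation.wf (fun {_ Y} h => Set.ncard_lt_ncard (ssubset_of_isProperDivisorTS h) Y.2.1)
    (InvImage.wf (fun X : PfinOne H => (X : Set H).ncard) wellFounded_lt)

end PfinOne

/-- `P_{fin,1}(H)` is Dedekind-finite, its only unit is the identity,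
it satisfies the ACC on principal two-sided ideals, and it is factorable. -/
theorem pfinOne_basic_properties (H : Type*) [Monoid H] :
    DedekindFiniteM (PfinOne H) ∧
    (∀ X : PfinOne H, IsUnit X → X = 1) ∧
    ACCPrincipalTS (PfinOne H) ∧
    FactorableM (PfinOne H) := by
  have hwf := PfinOne.wellFounded_isProperDivisorTS (H := H)
  refine ⟨fun X Y h => ?_, fun X hX => ?_, accPrincipalTS_iff_wellFounded.2 hwf,
    factorableM_of_wellFounded hwf⟩
  · obtain ⟨rfl, rfl⟩ := PfinOne.mul_eq_one_iff.1 h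
    exact mul_one 1
  · obtain ⟨u, rfl⟩ := hX
    exact (PfinOne.mul_eq_one_iff.1 u.mul_inv).1
end

section
/- For a monoid H, the restricted finitary power monoid P_{fin,×}(H) is a divisor-closed submonoid of the finitary power monoid P_fin(H) if and only if H is Dedekind-finite. -/
/-!
In a Dedekind-finite monoid a product is a unit only if every factor is, so if a unit
`u = a * b * c` lies in `X = U * Y * V`, then `b ∈ Y` is a unit. Conversely, if `x * y = 1` then
`{1} = {x} * {y}`, so divisor-closedness forces the singleton `{y}` to contain a unit; then `x` is
the inverse of `y`, and `y * x = 1`.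
-/

open scoped Pointwise

theorem dedekindFiniteM_iff_isDedekindFiniteMonoid {M : Type*} [Monoid M] :
    DedekindFiniteM M ↔ IsDedekindFiniteMonoid M :=
  ⟨fun h => ⟨h _ _⟩, fun _ _ _ => mul_eq_one_symm⟩

theorem IsUnit.mul_eq_one_symm {M : Type*} [Monoid M] {x y : M} (hy : IsUnit y)
    (h : x * y = 1) : y * x = 1 := by
  obtain ⟨u, rfl⟩ := hy
  rw [Units.mul_eq_one_iff_eq_inv] at h
  rw [h, Units.mul_inv]

theorem singleton_mem_PfinM {H : Type*} [Monoid H] (x : H) : ({x} : Set H) ∈ PfinM H :=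
  ⟨Set.finite_singleton x, Set.singleton_nonempty x⟩

theorem exists_isUnit_mem_of_isUnit_mem_mul_mul {H : Type*} [Monoid H] [IsDedekindFiniteMonoid H]
    {A B C : Set H} {u : H} (hu : u ∈ A * B * C) (hunit : IsUnit u) : ∃ b ∈ B, IsUnit b := by
  obtain ⟨_, ⟨a, -, b, hb, rfl⟩, c, -, rfl⟩ := hu
  exact ⟨b, hb, (IsUnit.mul_iff.mp (IsUnit.mul_iff.mp hunit).1).2⟩

theorem coe_mem_PfinTimes_of_dvdTS {H : Type*} [Monoid H] [IsDedekindFiniteMonoid H]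
    {X Y : PfinM H} (hX : (X : Set H) ∈ PfinTimes H) (hYX : DvdTS Y X) :
    (Y : Set H) ∈ PfinTimes H := by
  obtain ⟨-, u, hu, hunit⟩ := hX
  obtain ⟨U, V, rfl⟩ := hYX
  exact ⟨Y.2.1, exists_isUnit_mem_of_isUnit_mem_mul_mul hu hunit⟩

theorem isDedekindFiniteMonoid_of_pfinTimes_dvdTS_closed {H : Type*} [Monoid H]
    (hdc : ∀ X Y : PfinM H, (X : Set H) ∈ PfinTimes H → DvdTS Y X → (Y : Set H) ∈ PfinTimes H) :
    IsDedekindFiniteMonoid H := by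
  refine ⟨fun {x y} hxy => ?_⟩
  have hdvd : DvdTS (⟨{y}, singleton_mem_PfinM y⟩ : PfinM H) ⟨{1}, singleton_mem_PfinM 1⟩ :=
    ⟨⟨{x}, singleton_mem_PfinM x⟩, 1, Subtype.ext (by simp [hxy])⟩
  obtain ⟨-, _, rfl, hy⟩ := hdc _ _ (PfinTimes H).one_mem hdvd
  exact hy.mul_eq_one_symm hxy

/-- `P_{fin,×}(H)` is divisor-closed in `P_fin(H)` iff `H` is Dedekind-finite. -/
theorem pfinTimes_divisor_closed_iff_dedekind_finite (H : Type*) [Monoid H] :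
    (∀ X Y : PfinM H, (X : Set H) ∈ PfinTimes H → DvdTS Y X → (Y : Set H) ∈ PfinTimes H)
      ↔ DedekindFiniteM H := by
  rw [dedekindFiniteM_iff_isDedekindFiniteMonoid]
  exact ⟨isDedekindFiniteMonoid_of_pfinTimes_dvdTS_closed,
    fun _ _ _ => coe_mem_PfinTimes_of_dvdTS⟩
end

section
/- For every monoid H, the restricted finitary power monoid P_{fin,×}(H) is Dedekind-finite; moreover, the finitary power monoid P_fin(H) is Dedekind-finite if and only if H is Dedekind-finite. -/
open scoped Pointwise

/-!
If `X * Y = {1}` for subsets of a monoid, then `x * y = 1` for all `x ∈ X`, `y ∈ Y`. As soon as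
some pair also satisfies `y₀ * x₀ = 1`, the elements `x₀, y₀` are two-sided inverses of each other
and this forces `X = {x₀}` and `Y = {y₀}`, whence `Y * X = {1}`. Such a pair exists when `X`
contains a unit (take `x₀` to be the unit), and also when `H` itself is Dedekind-finite.
Conversely, singletons embed `H` into `P_fin(H)`.
-/

namespace Set

variable {H : Type*} [Monoid H] {X Y : Set H} {x y : H}

theorem mul_eq_one_of_mem (h : X * Y = 1) (hx : x ∈ X) (hy : y ∈ Y) :
    x * y = 1 :=
  mem_one.1 (h ▸ mul_mem_mul hx hy)

theorem mul_eq_one_symm_of_mem (h : X * Y = 1) (hx : x ∈ X) (hy : y ∈ Y) (hyx : y * x = 1) :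
    Y * X = 1 := by
  have hX : X = {x} := eq_singleton_iff_unique_mem.2 ⟨hx, fun x' hx' => calc
    x' = x' * y * x := by rw [mul_assoc, hyx, mul_one]
    _ = x := by rw [mul_eq_one_of_mem h hx' hy, one_mul]⟩
  have hY : Y = {y} := eq_singleton_iff_unique_mem.2 ⟨hy, fun y' hy' => calc
    y' = y * (x * y') := by rw [← mul_assoc, hyx, one_mul]
    _ = y := by rw [mul_eq_one_of_mem h hx hy', mul_one]⟩
  rw [hX, hY, singleton_mul_singleton, hyx, singleton_one]

end Set

section

variable {H : Type*} [Monoid H]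

theorem dedekindFiniteM_of_exists_mem_mul_eq_one {S : Submonoid (Set H)}
    (h : ∀ X ∈ S, ∀ Y ∈ S, X * Y = 1 → ∃ x ∈ X, ∃ y ∈ Y, y * x = 1) :
    DedekindFiniteM S := by
  rintro ⟨X, hXS⟩ ⟨Y, hYS⟩ hXY
  have hXY : X * Y = 1 := congrArg Subtype.val hXY
  obtain ⟨x, hx, y, hy, hyx⟩ := h X hXS Y hYS hXY
  exact Subtype.ext (Set.mul_eq_one_symm_of_mem hXY hx hy hyx)

theorem dedekindFiniteM_pfinTimes : DedekindFiniteM (PfinTimes H) := by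
  refine dedekindFiniteM_of_exists_mem_mul_eq_one fun _ ⟨_, u, hu, hu_unit⟩ _ ⟨_, y, hy, _⟩ hXY =>
    ⟨u, hu, y, hy, ?_⟩
  exact hu_unit.isRegular.left.mul_eq_one_symm (Set.mul_eq_one_of_mem hXY hu hy)

theorem DedekindFiniteM.pfinM (hH : DedekindFiniteM H) : DedekindFiniteM (PfinM H) :=
  dedekindFiniteM_of_exists_mem_mul_eq_one fun _ ⟨_, x, hx⟩ _ ⟨_, y, hy⟩ hXY =>
    ⟨x, hx, y, hy, hH x y (Set.mul_eq_one_of_mem hXY hx hy)⟩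

theorem DedekindFiniteM.of_pfinM (hP : DedekindFiniteM (PfinM H)) : DedekindFiniteM H := by
  intro x y hxy
  let single (a : H) : PfinM H := ⟨{a}, Set.finite_singleton a, Set.singleton_nonempty a⟩
  have hyx := congrArg Subtype.val <| hP (single x) (single y) <| Subtype.ext <| by
    change {x} * {y} = (1 : Set H)
    rw [Set.singleton_mul_singleton, hxy, Set.singleton_one]
  change {y} * {x} = (1 : Set H) at hyx
  rwa [Set.singleton_mul_singleton, ← Set.singleton_one, Set.singleton_eq_singleton_iff] at hyx

end

/-- `P_{fin,×}(H)` is always Dedekind-finite, and `P_fin(H)` is Dedekind-finite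
iff `H` is. -/
theorem dedekind_finiteness_of_power_monoids (H : Type*) [Monoid H] :
    DedekindFiniteM (PfinTimes H) ∧ (DedekindFiniteM (PfinM H) ↔ DedekindFiniteM H) :=
  ⟨dedekindFiniteM_pfinTimes, DedekindFiniteM.of_pfinM, DedekindFiniteM.pfinM⟩
end

section
/- For a monoid H, the following are equivalent: (a) H is trivial (i.e., H = {1_H}); (b) the finitary power monoid P_fin(H) is cancellative; (c) the restricted finitary power monoid P_{fin,×}(H) is cancellative; (d) the reduced finitary power monoid P_{fin,1}(H) is cancellative. -/
open scoped Pointwise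

/-!
If `H` is trivial, every non-empty subset of `H` equals `{1}`, so all three power monoids are
trivial. Conversely, every finite set containing `1` lies in all three of them, and for `A = {1, x}`
one has `A * {1, x²} = {1, x, x², x³} = A * A²`. Cancelling `A` gives `{1, x²} = A²`, so `x = 1`
or `x` is idempotent; in the latter case `A * A = A`, and cancelling once more gives `A = {1}`.
-/

section Cancellative

variable {M N : Type*} [Monoid M] [Monoid N]

theorem cancellativeM_of_subsingleton [Subsingleton M] : CancellativeM M :=
  fun _ x y => ⟨fun _ => Subsingleton.elim x y, fun _ => Subsingleton.elim x y⟩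

theorem CancellativeM.of_injective (hM : CancellativeM M) (f : N →* M)
    (hf : Function.Injective f) : CancellativeM N := by
  refine fun a x y => ⟨fun h => hf ?_, fun h => hf ?_⟩
  · exact (hM (f a) (f x) (f y)).1 (by simp only [← map_mul, h])
  · exact (hM (f a) (f x) (f y)).2 (by simp only [← map_mul, h])

theorem CancellativeM.eq_one_of_mul_self (hM : CancellativeM M) {a : M} (ha : a * a = a) :
    a = 1 :=
  (hM a a 1).1 (by rw [ha, mul_one])

end Cancellative

section PowerMonoids

variable {H : Type*} [Monoid H]

theorem Set.pair_one_mul_self (x : H) : ({1, x} : Set H) * {1, x} = {1, x, x * x} := by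
  ext y
  simp only [Set.mem_mul, Set.mem_insert_iff, Set.mem_singleton_iff,
    exists_eq_or_imp, exists_eq_left, one_mul, mul_one]
  tauto

theorem Set.pair_one_mul_pair_one_mul_self (x : H) :
    ({1, x} : Set H) * {1, x * x} = {1, x} * {1, x, x * x} := by
  ext y
  simp only [Set.mem_mul, Set.mem_insert_iff, Set.mem_singleton_iff,
    exists_eq_or_imp, exists_eq_left, one_mul, mul_one]
  tauto

theorem insert_one_mem_pfinOne {s : Set H} (hs : s.Finite) : insert 1 s ∈ PfinOne H :=
  ⟨hs.insert 1, Set.mem_insert 1 s⟩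

theorem pfinOne_le_pfinTimes : PfinOne H ≤ PfinTimes H :=
  fun _ hX => ⟨hX.1, 1, hX.2, isUnit_one⟩

theorem pfinTimes_le_pfinM : PfinTimes H ≤ PfinM H :=
  fun _ hX => ⟨hX.1, hX.2.imp fun _ hu => hu.1⟩

theorem subsingleton_of_le_pfinM {S : Submonoid (Set H)} (hS : S ≤ PfinM H)
    (h : ∀ x : H, x = 1) : Subsingleton S := by
  have : Subsingleton H := ⟨fun x y => (h x).trans (h y).symm⟩
  refine ⟨fun X Y => Subtype.ext ?_⟩
  rw [(hS X.2).2.eq_univ, (hS Y.2).2.eq_univ]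

theorem eq_one_of_cancellativeM_pfinOne (hc : CancellativeM (PfinOne H)) (x : H) : x = 1 := by
  let A : PfinOne H := ⟨{1, x}, insert_one_mem_pfinOne (Set.finite_singleton x)⟩
  let B : PfinOne H := ⟨{1, x * x}, insert_one_mem_pfinOne (Set.finite_singleton _)⟩
  have hB : B = A * A :=
    (hc A B (A * A)).1 <| Subtype.ext <| by
      simp only [B, A, Submonoid.coe_mul, Set.pair_one_mul_self, Set.pair_one_mul_pair_one_mul_self]
  have hx : x = 1 ∨ x = x * x := by
    simpa [B, A, Set.pair_one_mul_self] using congrArg (x ∈ ·.1) hB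
  rcases hx with hx | hx
  · exact hx
  · have hA : A = 1 := hc.eq_one_of_mul_self <| Subtype.ext <| by
      simp only [A, Submonoid.coe_mul, Set.pair_one_mul_self, ← hx, Set.insert_eq_of_mem,
        Set.mem_singleton_iff]
    simpa [A] using congrArg (x ∈ ·.1) hA

theorem eq_one_iff_cancellativeM {S : Submonoid (Set H)} (hOne : PfinOne H ≤ S)
    (hM : S ≤ PfinM H) : (∀ x : H, x = 1) ↔ CancellativeM S := by
  refine ⟨fun h => ?_, fun hc => ?_⟩
  · have := subsingleton_of_le_pfinM hM h
    exact cancellativeM_of_subsingleton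
  · exact eq_one_of_cancellativeM_pfinOne
      (hc.of_injective (Submonoid.inclusion hOne) (Submonoid.inclusion_injective hOne))

end PowerMonoids

/-- `H` is trivial iff `P_fin(H)` is cancellative iff `P_{fin,×}(H)` is
cancellative iff `P_{fin,1}(H)` is cancellative. -/
theorem cancellativity_of_power_monoids (H : Type*) [Monoid H] :
    ((∀ x : H, x = 1) ↔ CancellativeM (PfinM H)) ∧
    ((∀ x : H, x = 1) ↔ CancellativeM (PfinTimes H)) ∧
    ((∀ x : H, x = 1) ↔ CancellativeM (PfinOne H)) :=
  ⟨eq_one_iff_cancellativeM (pfinOne_le_pfinTimes.trans pfinTimes_le_pfinM) le_rfl,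
    eq_one_iff_cancellativeM pfinOne_le_pfinTimes pfinTimes_le_pfinM,
    eq_one_iff_cancellativeM le_rfl (pfinOne_le_pfinTimes.trans pfinTimes_le_pfinM)⟩
end

section
/- If H is a linearly orderable monoid, then the finitary power monoid P_fin(H) (and hence its submonoid P_{fin,×}(H)) is strongly unit-cancellative and torsion-free. -/
open scoped Pointwise

section Aux
variable {H : Type*} [Monoid H] [LinearOrder H]

private lemma cancelL (hmul : ∀ u v x y : H, x < y → u * x * v < u * y * v)
    (a b c : H) (h : a * b = a * c) : b = c := by
  rcases lt_trichotomy b c with hlt | he | hlt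
  · have := hmul a 1 b c hlt; simp only [mul_one] at this; exact absurd h this.ne
  · exact he
  · have := hmul a 1 c b hlt; simp only [mul_one] at this; exact absurd h.symm this.ne

private lemma cancelR (hmul : ∀ u v x y : H, x < y → u * x * v < u * y * v)
    (a b c : H) (h : b * a = c * a) : b = c := by
  rcases lt_trichotomy b c with hlt | he | hlt
  · have := hmul 1 a b c hlt; simp only [one_mul] at this; exact absurd h this.ne
  · exact he
  · have := hmul 1 a c b hlt; simp only [one_mul] at this; exact absurd h.symm this.ne

private lemma leMono (hmul : ∀ u v x y : H, x < y → u * x * v < u * y * v)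
    (u v x y : H) (h : x ≤ y) : u * x * v ≤ u * y * v := by
  rcases h.lt_or_eq with h' | rfl
  · exact (hmul u v x y h').le
  · exact le_rfl

private lemma greatest_mul (hmul : ∀ u v x y : H, x < y → u * x * v < u * y * v)
    {X Y : Set H} {mX mY : H} (hX : IsGreatest X mX) (hY : IsGreatest Y mY) :
    IsGreatest (X * Y) (mX * mY) := by
  refine ⟨Set.mul_mem_mul hX.1 hY.1, ?_⟩
  rintro z hz
  rw [Set.mem_mul] at hz
  obtain ⟨a, ha, b, hb, rfl⟩ := hz
  have h1 : a * b ≤ mX * b := by simpa using leMono hmul 1 b a mX (hX.2 ha)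
  have h2 : mX * b ≤ mX * mY := by simpa using leMono hmul mX 1 b mY (hY.2 hb)
  exact h1.trans h2

private lemma least_mul (hmul : ∀ u v x y : H, x < y → u * x * v < u * y * v)
    {X Y : Set H} {mX mY : H} (hX : IsLeast X mX) (hY : IsLeast Y mY) :
    IsLeast (X * Y) (mX * mY) := by
  refine ⟨Set.mul_mem_mul hX.1 hY.1, ?_⟩
  rintro z hz
  rw [Set.mem_mul] at hz
  obtain ⟨a, ha, b, hb, rfl⟩ := hz
  have h1 : mX * b ≤ a * b := by simpa using leMono hmul 1 b mX a (hX.2 ha)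
  have h2 : mX * mY ≤ mX * b := by simpa using leMono hmul mX 1 mY b (hY.2 hb)
  exact h2.trans h1

private lemma exists_greatest' {X : Set H} (hXf : X.Finite) (hXn : X.Nonempty) :
    ∃ m, IsGreatest X m := by
  obtain ⟨a, ha, h⟩ := Set.exists_max_image X id hXf hXn
  exact ⟨a, ha, fun x hx => h x hx⟩

private lemma exists_least' {X : Set H} (hXf : X.Finite) (hXn : X.Nonempty) :
    ∃ m, IsLeast X m := by
  obtain ⟨a, ha, h⟩ := Set.exists_min_image X id hXf hXn
  exact ⟨a, ha, fun x hx => h x hx⟩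

private lemma key_right (hmul : ∀ u v x y : H, x < y → u * x * v < u * y * v)
    {X Y : Set H} (hXf : X.Finite) (hXn : X.Nonempty) (hYf : Y.Finite) (hYn : Y.Nonempty)
    (h : X * Y = X) : Y = 1 := by
  obtain ⟨mX, hmX⟩ := exists_greatest' hXf hXn
  obtain ⟨mY, hmY⟩ := exists_greatest' hYf hYn
  obtain ⟨lX, hlX⟩ := exists_least' hXf hXn
  obtain ⟨lY, hlY⟩ := exists_least' hYf hYn
  have hg : IsGreatest X (mX * mY) := h ▸ greatest_mul hmul hmX hmY
  have hl : IsLeast X (lX * lY) := h ▸ least_mul hmul hlX hlY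
  have h1 : mX * mY = mX := hg.unique hmX
  have h2 : lX * lY = lX := hl.unique hlX
  have hmY1 : mY = 1 := cancelL hmul mX mY 1 (by rw [h1, mul_one])
  have hlY1 : lY = 1 := cancelL hmul lX lY 1 (by rw [h2, mul_one])
  ext y
  simp only [Set.mem_one]
  constructor
  · intro hy
    exact le_antisymm (hmY1 ▸ hmY.2 hy) (hlY1 ▸ hlY.2 hy)
  · rintro rfl
    exact hmY1 ▸ hmY.1

private lemma key_left (hmul : ∀ u v x y : H, x < y → u * x * v < u * y * v)
    {X Y : Set H} (hXf : X.Finite) (hXn : X.Nonempty) (hYf : Y.Finite) (hYn : Y.Nonempty)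
    (h : Y * X = X) : Y = 1 := by
  obtain ⟨mX, hmX⟩ := exists_greatest' hXf hXn
  obtain ⟨mY, hmY⟩ := exists_greatest' hYf hYn
  obtain ⟨lX, hlX⟩ := exists_least' hXf hXn
  obtain ⟨lY, hlY⟩ := exists_least' hYf hYn
  have hg : IsGreatest X (mY * mX) := h ▸ greatest_mul hmul hmY hmX
  have hl : IsLeast X (lY * lX) := h ▸ least_mul hmul hlY hlX
  have h1 : mY * mX = mX := hg.unique hmX
  have h2 : lY * lX = lX := hl.unique hlX
  have hmY1 : mY = 1 := cancelR hmul mX mY 1 (by rw [h1, one_mul])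
  have hlY1 : lY = 1 := cancelR hmul lX lY 1 (by rw [h2, one_mul])
  ext y
  simp only [Set.mem_one]
  constructor
  · intro hy
    exact le_antisymm (hmY1 ▸ hmY.2 hy) (hlY1 ▸ hlY.2 hy)
  · rintro rfl
    exact hmY1 ▸ hmY.1

private lemma poOneLtPow (hmul : ∀ u v x y : H, x < y → u * x * v < u * y * v)
    {x : H} (hx : 1 < x) : ∀ d : ℕ, 1 < x ^ (d + 1)
  | 0 => by simpa using hx
  | d + 1 => by
    have h1 : x ^ (d + 1) < x ^ (d + 2) := by
      have := hmul (x ^ (d + 1)) 1 1 x hx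
      simpa [pow_succ] using this
    exact (poOneLtPow hmul hx d).trans h1

private lemma poPowLtOne (hmul : ∀ u v x y : H, x < y → u * x * v < u * y * v)
    {x : H} (hx : x < 1) : ∀ d : ℕ, x ^ (d + 1) < 1
  | 0 => by simpa using hx
  | d + 1 => by
    have h1 : x ^ (d + 2) < x ^ (d + 1) := by
      have := hmul (x ^ (d + 1)) 1 x 1 hx
      simpa [pow_succ] using this
    exact h1.trans (poPowLtOne hmul hx d)

private lemma poPowEqOne (hmul : ∀ u v x y : H, x < y → u * x * v < u * y * v)
    {x : H} {d : ℕ} (h : x ^ (d + 1) = 1) : x = 1 := by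
  rcases lt_trichotomy x 1 with hlt | he | hlt
  · exact absurd h (poPowLtOne hmul hlt d).ne
  · exact he
  · exact absurd h (poOneLtPow hmul hlt d).ne'

private lemma greatest_pow (hmul : ∀ u v x y : H, x < y → u * x * v < u * y * v)
    {X : Set H} {m : H} (hm : IsGreatest X m) : ∀ d : ℕ, IsGreatest (X ^ d) (m ^ d)
  | 0 => by
    simp only [pow_zero]
    exact ⟨Set.mem_one.mpr rfl, fun x hx => (Set.mem_one.mp hx).le⟩
  | d + 1 => by
    rw [pow_succ, pow_succ]
    exact greatest_mul hmul (greatest_pow hmul hm d) hm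

private lemma least_pow (hmul : ∀ u v x y : H, x < y → u * x * v < u * y * v)
    {X : Set H} {m : H} (hm : IsLeast X m) : ∀ d : ℕ, IsLeast (X ^ d) (m ^ d)
  | 0 => by
    simp only [pow_zero]
    exact ⟨Set.mem_one.mpr rfl, fun x hx => (Set.mem_one.mp hx).ge⟩
  | d + 1 => by
    rw [pow_succ, pow_succ]
    exact least_mul hmul (least_pow hmul hm d) hm

private lemma set_pow_eq_one (hmul : ∀ u v x y : H, x < y → u * x * v < u * y * v)
    {X : Set H} (hXf : X.Finite) (hXn : X.Nonempty) {d : ℕ} (h : X ^ (d + 1) = 1) :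
    X = 1 := by
  obtain ⟨mX, hmX⟩ := exists_greatest' hXf hXn
  obtain ⟨lX, hlX⟩ := exists_least' hXf hXn
  have hg : IsGreatest (1 : Set H) (mX ^ (d + 1)) := h ▸ greatest_pow hmul hmX (d + 1)
  have hl : IsLeast (1 : Set H) (lX ^ (d + 1)) := h ▸ least_pow hmul hlX (d + 1)
  have hone : IsGreatest (1 : Set H) 1 := ⟨Set.mem_one.mpr rfl, fun x hx => (Set.mem_one.mp hx).le⟩
  have hone' : IsLeast (1 : Set H) 1 := ⟨Set.mem_one.mpr rfl, fun x hx => (Set.mem_one.mp hx).ge⟩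
  have hm1 : mX = 1 := poPowEqOne hmul (hg.unique hone)
  have hl1 : lX = 1 := poPowEqOne hmul (hl.unique hone')
  ext y
  simp only [Set.mem_one]
  constructor
  · intro hy
    exact le_antisymm (hm1 ▸ hmX.2 hy) (hl1 ▸ hlX.2 hy)
  · rintro rfl
    exact hm1 ▸ hmX.1

private lemma main_aux (hmul : ∀ u v x y : H, x < y → u * x * v < u * y * v)
    (S : Submonoid (Set H)) (hS : ∀ X ∈ S, X.Finite ∧ X.Nonempty) :
    StrongUnitCancellativeM S ∧ TorsionFreeM S := by
  constructor
  · intro x y hy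
    have hx := hS x.1 x.2
    have hyp := hS y.1 y.2
    constructor
    · intro heq
      apply hy
      have : (x : Set H) * y = x := congrArg Subtype.val heq
      exact Subtype.ext (key_right hmul hx.1 hx.2 hyp.1 hyp.2 this)
    · intro heq
      apply hy
      have : (y : Set H) * x = x := congrArg Subtype.val heq
      exact Subtype.ext (key_left hmul hx.1 hx.2 hyp.1 hyp.2 this)
  · intro x hfin
    haveI : Finite ↥(Set.range fun k : ℕ => x ^ k) := hfin.to_subtype
    obtain ⟨m, n, hmn, heq⟩ :=
      Finite.exists_ne_map_eq_of_infinite (Set.rangeFactorization fun k : ℕ => x ^ k)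
    have heq' : x ^ m = x ^ n := congrArg Subtype.val heq
    clear heq
    wlog hlt : m < n generalizing m n
    · exact this n m hmn.symm heq'.symm ((Ne.lt_or_gt hmn).resolve_left hlt)
    have hkey : x ^ m * x ^ (n - m) = x ^ m := by
      rw [← pow_add, Nat.add_sub_cancel' hlt.le, ← heq']
    have hkey' : (x : Set H) ^ m * (x : Set H) ^ (n - m) = (x : Set H) ^ m := by
      have := congrArg Subtype.val hkey
      simpa [SubmonoidClass.coe_pow] using this
    have hxm := hS (x ^ m).1 (x ^ m).2
    have hxd := hS (x ^ (n - m)).1 (x ^ (n - m)).2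
    rw [SubmonoidClass.coe_pow] at hxm hxd
    have hpow1 : (x : Set H) ^ (n - m) = 1 :=
      key_right hmul hxm.1 hxm.2 hxd.1 hxd.2 hkey'
    obtain ⟨d, hd⟩ : ∃ d : ℕ, n - m = d + 1 :=
      ⟨n - m - 1, (Nat.succ_pred_eq_of_pos (Nat.sub_pos_of_lt hlt)).symm⟩
    rw [hd] at hpow1
    have hx := hS x.1 x.2
    exact Subtype.ext (set_pow_eq_one hmul hx.1 hx.2 hpow1)

end Aux

/-- if `H` is linearly orderable, then `P_fin(H)` and `P_{fin,×}(H)` are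
strongly unit-cancellative and torsion-free. -/
theorem pfin_strongly_unit_cancellative_of_linearly_orderable {H : Type*} [Monoid H]
    (h : ∃ r : H → H → Prop, IsLinearOrder H r ∧
      ∀ u v x y : H, r x y → x ≠ y → r (u * x * v) (u * y * v) ∧ u * x * v ≠ u * y * v) :
    (StrongUnitCancellativeM (PfinM H) ∧ TorsionFreeM (PfinM H)) ∧
    (StrongUnitCancellativeM (PfinTimes H) ∧ TorsionFreeM (PfinTimes H)) := by
  obtain ⟨r, hr, hcomp⟩ := h
  haveI := hr
  letI : LinearOrder H :=
    { le := r
      le_refl := fun a => refl_of r a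
      le_trans := fun a b c => trans_of r
      le_antisymm := fun a b h1 h2 => antisymm_of r h1 h2
      le_total := fun a b => total_of r a b
      toDecidableLE := fun a b => Classical.dec _ }
  have hmul : ∀ u v x y : H, x < y → u * x * v < u * y * v := by
    intro u v x y hxy
    have hne : x ≠ y := fun he => hxy.ne he
    obtain ⟨h1, h2⟩ := hcomp u v x y hxy.le hne
    exact lt_of_le_of_ne h1 h2
  constructor
  · exact main_aux hmul (PfinM H) (fun X hX => hX)
  · refine main_aux hmul (PfinTimes H) (fun X hX => ⟨hX.1, ?_⟩)
    obtain ⟨u, hu, -⟩ := hX.2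
    exact ⟨u, hu⟩
end

section
/- For every monoid H: (1) for each x ∈ H with x ≠ 1_H, the set {1_H, x} is a quark of the reduced finitary power monoid P_{fin,1}(H); (2) for all u ∈ H^× and x ∈ H with u ≠ x, the set {u, x} is a quark of the restricted finitary power monoid P_{fin,×}(H). -/
open scoped Pointwise

/-!
In both monoids a divisor `B` of `A` satisfies `u B v ⊆ A` for some units `u, v` of `H` taken
from the cofactors (`u = v = 1` in `P_{fin,1}(H)`, where every element contains `1`). Hence
`|B| ≤ |A|`, with equality only if `u B v = A`, in which case `A` divides `B`; and the sets of
size `1` are unit-divisors. So every two-element set is a quark.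
-/

theorem isQuarkTS_of_size_eq_two {M : Type*} [Monoid M] (size : M → ℕ)
    (size_le : ∀ b a : M, DvdTS b a → size b ≤ size a)
    (dvdTS_of_size_eq : ∀ b a : M, DvdTS b a → size b = size a → DvdTS a b)
    (size_one : size 1 ≤ 1)
    (isUnitDivisor_of_size_le_one : ∀ b : M, size b ≤ 1 → IsUnitDivisor b)
    {a : M} (ha : size a = 2) : IsQuarkTS a := by
  refine ⟨fun h => by have := size_le a 1 h; omega, fun b ⟨hba, hab⟩ => ?_⟩
  have hle := size_le b a hba
  have hne : size b ≠ size a := fun h => hab (dvdTS_of_size_eq b a hba h)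
  exact isUnitDivisor_of_size_le_one b (by omega)

namespace PfinOne

variable {H : Type*} [Monoid H]

theorem coe_subset_of_dvdTS {A B : PfinOne H} (h : DvdTS B A) : (B : Set H) ⊆ A := by
  obtain ⟨U, V, rfl⟩ := h
  simp only [Submonoid.coe_mul]
  exact (Set.subset_mul_right _ U.2.2).trans (Set.subset_mul_left _ V.2.2)

theorem ncard_le_of_dvdTS {A B : PfinOne H} (h : DvdTS B A) :
    (B : Set H).ncard ≤ (A : Set H).ncard :=
  Set.ncard_le_ncard (coe_subset_of_dvdTS h) A.2.1

theorem dvdTS_of_ncard_eq {A B : PfinOne H} (h : DvdTS B A)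
    (hcard : (B : Set H).ncard = (A : Set H).ncard) : DvdTS A B := by
  have hBA : B = A := Subtype.ext <|
    Set.eq_of_subset_of_ncard_le (coe_subset_of_dvdTS h) hcard.ge A.2.1
  exact ⟨1, 1, by rw [hBA, one_mul, mul_one]⟩

theorem isUnitDivisor_of_ncard_le_one {B : PfinOne H} (h : (B : Set H).ncard ≤ 1) :
    IsUnitDivisor B := by
  have hB : B = 1 := Subtype.ext <| Set.Subset.antisymm
    (fun b hb => (Set.ncard_le_one B.2.1).1 h b hb 1 B.2.2) (Set.singleton_subset_iff.2 B.2.2)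
  exact ⟨1, 1, by rw [hB, one_mul, one_mul]⟩

theorem isQuarkTS_of_ncard_eq_two {A : PfinOne H} (hA : (A : Set H).ncard = 2) :
    IsQuarkTS A :=
  isQuarkTS_of_size_eq_two (fun B : PfinOne H => (B : Set H).ncard)
    (fun _ _ => ncard_le_of_dvdTS) (fun _ _ => dvdTS_of_ncard_eq)
    (Set.ncard_singleton 1).le (fun _ => isUnitDivisor_of_ncard_le_one) hA

end PfinOne

namespace PfinTimes

variable {H : Type*} [Monoid H]

theorem singleton_mem {w : H} (hw : IsUnit w) : ({w} : Set H) ∈ PfinTimes H :=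
  ⟨Set.finite_singleton w, w, rfl, hw⟩

theorem ncard_singleton_mul_mul_singleton (a b : Hˣ) (B : Set H) :
    ({(a : H)} * B * {(b : H)}).ncard = B.ncard := by
  rw [Set.singleton_mul, Set.mul_singleton,
    Set.ncard_image_of_injective _ b.isUnit.mul_left_injective,
    Set.ncard_image_of_injective _ a.isUnit.mul_right_injective]

theorem exists_singleton_mul_mul_singleton_subset_of_dvdTS {A B : PfinTimes H}
    (h : DvdTS B A) : ∃ a b : Hˣ, {(a : H)} * (B : Set H) * {(b : H)} ⊆ A := by
  obtain ⟨U, V, rfl⟩ := h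
  obtain ⟨a, haU, ha⟩ := U.2.2
  obtain ⟨b, hbV, hb⟩ := V.2.2
  refine ⟨ha.unit, hb.unit, ?_⟩
  simp only [Submonoid.coe_mul]
  gcongr <;> simpa

theorem ncard_le_of_dvdTS {A B : PfinTimes H} (h : DvdTS B A) :
    (B : Set H).ncard ≤ (A : Set H).ncard := by
  obtain ⟨a, b, hsub⟩ := exists_singleton_mul_mul_singleton_subset_of_dvdTS h
  rw [← ncard_singleton_mul_mul_singleton a b]
  exact Set.ncard_le_ncard hsub A.2.1

theorem dvdTS_of_ncard_eq {A B : PfinTimes H} (h : DvdTS B A)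
    (hcard : (B : Set H).ncard = (A : Set H).ncard) : DvdTS A B := by
  obtain ⟨a, b, hsub⟩ := exists_singleton_mul_mul_singleton_subset_of_dvdTS h
  have hA : {(a : H)} * (B : Set H) * {(b : H)} = A := Set.eq_of_subset_of_ncard_le hsub
    (by rw [ncard_singleton_mul_mul_singleton, hcard]) A.2.1
  refine ⟨⟨_, singleton_mem a⁻¹.isUnit⟩, ⟨_, singleton_mem b⁻¹.isUnit⟩,
    Subtype.ext ?_⟩
  rw [Submonoid.coe_mul, Submonoid.coe_mul, ← hA, ← mul_assoc, ← mul_assoc,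
    Set.singleton_mul_singleton, Units.inv_mul, Set.singleton_one, one_mul, mul_assoc,
    Set.singleton_mul_singleton, Units.mul_inv, Set.singleton_one, mul_one]

theorem isUnitDivisor_of_ncard_le_one {B : PfinTimes H} (h : (B : Set H).ncard ≤ 1) :
    IsUnitDivisor B := by
  obtain ⟨w, hwB, hw⟩ := B.2.2
  have hB : (B : Set H) = {w} := Set.Subset.antisymm
    (fun b hb => (Set.ncard_le_one B.2.1).1 h b hb w hwB) (Set.singleton_subset_iff.2 hwB)
  refine ⟨⟨_, singleton_mem hw.unit⁻¹.isUnit⟩, 1, Subtype.ext ?_⟩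
  simp only [Submonoid.coe_mul, Submonoid.coe_one, hB, mul_one, Set.singleton_mul_singleton,
    IsUnit.val_inv_mul, Set.singleton_one]

theorem isQuarkTS_of_ncard_eq_two {A : PfinTimes H} (hA : (A : Set H).ncard = 2) :
    IsQuarkTS A :=
  isQuarkTS_of_size_eq_two (fun B : PfinTimes H => (B : Set H).ncard)
    (fun _ _ => ncard_le_of_dvdTS) (fun _ _ => dvdTS_of_ncard_eq)
    (Set.ncard_singleton 1).le (fun _ => isUnitDivisor_of_ncard_le_one) hA

end PfinTimes

/-- `{1, x}` is a quark of `P_{fin,1}(H)` for each `x ≠ 1`, and `{u, x}` is a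
quark of `P_{fin,×}(H)` for each unit `u` and each `x ≠ u`. -/
theorem two_element_sets_are_quarks (H : Type*) [Monoid H] :
    (∀ x : H, x ≠ 1 →
      IsQuarkTS (⟨({1, x} : Set H),
        mem_PfinOne.mpr ⟨(Set.finite_singleton x).insert 1, Set.mem_insert 1 {x}⟩⟩ :
          PfinOne H)) ∧
    (∀ u x : H, ∀ hu : IsUnit u, u ≠ x →
      IsQuarkTS (⟨({u, x} : Set H),
        mem_PfinTimes.mpr ⟨(Set.finite_singleton x).insert u, u, Set.mem_insert u {x}, hu⟩⟩ :
          PfinTimes H)) :=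
  ⟨fun _ hx => PfinOne.isQuarkTS_of_ncard_eq_two (Set.ncard_pair hx.symm),
    fun _ _ _ hux => PfinTimes.isQuarkTS_of_ncard_eq_two (Set.ncard_pair hux)⟩
end

section
/- For every monoid H, an irreducible element X of the reduced finitary power monoid P_{fin,1}(H) fails to be an atom of P_{fin,1}(H) if and only if X = {1_H, x} for some x ∈ H with x ≠ 1_H such that x² = 1_H or x² = x; equivalently, every irreducible of P_{fin,1}(H) is an atom, with the exception of those two-element sets {1_H, x} with x² = 1_H or x² = x. -/
open scoped Pointwise

section AuxPfinOne

variable {H : Type*} [Monoid H]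

lemma PfinOne.one_mem'' (X : PfinOne H) : (1 : H) ∈ (X : Set H) := (mem_PfinOne.mp X.2).2

lemma PfinOne.finite'' (X : PfinOne H) : (X : Set H).Finite := (mem_PfinOne.mp X.2).1

lemma PfinOne.eq_one_iff {X : PfinOne H} : X = 1 ↔ (X : Set H) = {1} := by
  constructor
  · rintro rfl; rfl
  · intro h; exact Subtype.ext (h.trans rfl)

lemma PfinOne.coe_mul_eq {X Y Z : PfinOne H} (h : X * Y = Z) :
    (X : Set H) * (Y : Set H) = (Z : Set H) := congrArg Subtype.val h

lemma PfinOne.subset_mul_left_s12 (B C : PfinOne H) : (B : Set H) ⊆ (↑(B * C) : Set H) := by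
  intro b hb
  have h : b * 1 ∈ (B : Set H) * (C : Set H) := Set.mul_mem_mul hb (PfinOne.one_mem'' C)
  simpa using h

lemma PfinOne.subset_mul_right_s12 (B C : PfinOne H) : (C : Set H) ⊆ (↑(B * C) : Set H) := by
  intro c hc
  have h : 1 * c ∈ (B : Set H) * (C : Set H) := Set.mul_mem_mul (PfinOne.one_mem'' B) hc
  simpa using h

lemma PfinOne.dvdTS_subset {B X : PfinOne H} (h : DvdTS B X) :
    (B : Set H) ⊆ (X : Set H) := by
  obtain ⟨U, V, h⟩ := h
  intro b hb
  have h2 : (1 : H) * b * 1 ∈ (U : Set H) * (B : Set H) * (V : Set H) :=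
    Set.mul_mem_mul (Set.mul_mem_mul (PfinOne.one_mem'' U) hb) (PfinOne.one_mem'' V)
  rw [h]
  simpa using h2

lemma PfinOne.isUnitDivisor_iff {X : PfinOne H} : IsUnitDivisor X ↔ X = 1 := by
  constructor
  · intro h
    have hsub := PfinOne.dvdTS_subset h
    refine PfinOne.eq_one_iff.mpr (Set.Subset.antisymm (fun b hb => hsub hb) ?_)
    intro b hb
    rw [Set.mem_singleton_iff] at hb
    subst hb
    exact (PfinOne.one_mem'' X)
  · rintro rfl
    exact ⟨1, 1, by simp⟩

lemma PfinOne.isUnit_iff {X : PfinOne H} : IsUnit X ↔ X = 1 := by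
  constructor
  · rintro ⟨u, rfl⟩
    exact PfinOne.isUnitDivisor_iff.mp ⟨1, ↑u⁻¹, by rw [one_mul, Units.mul_inv]⟩
  · rintro rfl
    exact isUnit_one

lemma PfinOne.factor_eq {X B C : PfinOne H} (hX : IsIrredTS X) (h : X = B * C) :
    B = 1 ∨ C = 1 ∨ B = X ∨ C = X := by
  by_contra hcon
  push_neg at hcon
  obtain ⟨hB1, hC1, hBX, hCX⟩ := hcon
  have hdB : DvdTS B X := ⟨1, C, by simpa using h⟩
  have hdC : DvdTS C X := ⟨B, 1, by simpa using h⟩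
  refine hX.2 ⟨B, C, h, ⟨hdB, ?_⟩, ⟨hdC, ?_⟩,
    fun hu => hB1 (PfinOne.isUnitDivisor_iff.mp hu),
    fun hu => hC1 (PfinOne.isUnitDivisor_iff.mp hu)⟩
  · intro hdvd
    exact hBX (Subtype.ext (Set.Subset.antisymm (PfinOne.dvdTS_subset hdB)
      (PfinOne.dvdTS_subset hdvd)))
  · intro hdvd
    exact hCX (Subtype.ext (Set.Subset.antisymm (PfinOne.dvdTS_subset hdC)
      (PfinOne.dvdTS_subset hdvd)))

lemma PfinOne.exists_ne_one {K : PfinOne H} (hK : K ≠ 1) :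
    ∃ c ∈ (K : Set H), c ≠ 1 := by
  by_contra h
  push_neg at h
  refine hK (PfinOne.eq_one_iff.mpr (Set.Subset.antisymm ?_ ?_))
  · intro a ha; simp [h a ha]
  · intro a ha; rw [Set.mem_singleton_iff] at ha; subst ha; exact (PfinOne.one_mem'' K)

lemma PfinOne.not_subset_of_ne {K X : PfinOne H} (hsub : (K : Set H) ⊆ X) (hne : K ≠ X) :
    ∃ a ∈ (X : Set H), a ∉ (K : Set H) := by
  by_contra h
  push_neg at h
  exact hne (Subtype.ext (Set.Subset.antisymm hsub h))

/-- Key step: if `X` is irreducible and `X * K = X` for some `K ⊆ X` with `{1} ≠ K ≠ X`,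
then we reach a contradiction by the factorization `X = ((X \ K) ∪ {1}) * K`. -/
lemma PfinOne.absorb_right {X K : PfinOne H} (hX : IsIrredTS X)
    (hsub : (K : Set H) ⊆ X) (hK1 : K ≠ 1) (hKX : K ≠ X)
    (habs : X * K = X) : False := by
  classical
  have hA_mem : ((X : Set H) \ (K : Set H) ∪ {1}) ∈ PfinOne H :=
    mem_PfinOne.mpr ⟨((PfinOne.finite'' X).diff).union (Set.finite_singleton 1), by simp⟩
  let A : PfinOne H := ⟨(X : Set H) \ (K : Set H) ∪ {1}, hA_mem⟩
  have hAcoe : (A : Set H) = (X : Set H) \ (K : Set H) ∪ {1} := rfl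
  have hAX : (A : Set H) ⊆ X := by
    intro a ha
    rcases ha with h | h
    · exact h.1
    · rw [Set.mem_singleton_iff] at h; subst h; exact (PfinOne.one_mem'' X)
  have habs' : (X : Set H) * (K : Set H) = X := PfinOne.coe_mul_eq habs
  have hfact : X = A * K := by
    apply Subtype.ext
    show (X : Set H) = (A : Set H) * (K : Set H)
    apply Set.Subset.antisymm
    · intro x hx
      by_cases hxK : x ∈ (K : Set H)
      · have h1A : (1 : H) ∈ (A : Set H) := by rw [hAcoe]; simp
        have := Set.mul_mem_mul h1A hxK
        simpa using this
      · have hxA : x ∈ (A : Set H) := by rw [hAcoe]; exact Or.inl ⟨hx, hxK⟩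
        have := Set.mul_mem_mul hxA (PfinOne.one_mem'' K)
        simpa using this
    · calc (A : Set H) * (K : Set H) ⊆ (X : Set H) * (K : Set H) :=
            Set.mul_subset_mul_right hAX
        _ = X := habs'
  rcases PfinOne.factor_eq hX hfact with hA1 | h | hAeq | h
  · obtain ⟨a, haX, haK⟩ := PfinOne.not_subset_of_ne hsub hKX
    have haA : a ∈ (A : Set H) := by rw [hAcoe]; exact Or.inl ⟨haX, haK⟩
    rw [hA1] at haA
    have : a = 1 := by simpa using haA
    exact haK (this ▸ (PfinOne.one_mem'' K))
  · exact hK1 h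
  · obtain ⟨c, hcK, hc1⟩ := PfinOne.exists_ne_one hK1
    have hcX : c ∈ (X : Set H) := hsub hcK
    have : c ∈ (A : Set H) := by rw [hAeq]; exact hcX
    rw [hAcoe] at this
    rcases this with h | h
    · exact h.2 hcK
    · exact hc1 (by simpa using h)
  · exact hKX h

/-- Mirror of `absorb_right` for `K * X = X`. -/
lemma PfinOne.absorb_left {X K : PfinOne H} (hX : IsIrredTS X)
    (hsub : (K : Set H) ⊆ X) (hK1 : K ≠ 1) (hKX : K ≠ X)
    (habs : K * X = X) : False := by
  classical
  have hA_mem : ((X : Set H) \ (K : Set H) ∪ {1}) ∈ PfinOne H :=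
    mem_PfinOne.mpr ⟨((PfinOne.finite'' X).diff).union (Set.finite_singleton 1), by simp⟩
  let A : PfinOne H := ⟨(X : Set H) \ (K : Set H) ∪ {1}, hA_mem⟩
  have hAcoe : (A : Set H) = (X : Set H) \ (K : Set H) ∪ {1} := rfl
  have hAX : (A : Set H) ⊆ X := by
    intro a ha
    rcases ha with h | h
    · exact h.1
    · rw [Set.mem_singleton_iff] at h; subst h; exact (PfinOne.one_mem'' X)
  have habs' : (K : Set H) * (X : Set H) = X := PfinOne.coe_mul_eq habs
  have hfact : X = K * A := by
    apply Subtype.ext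
    show (X : Set H) = (K : Set H) * (A : Set H)
    apply Set.Subset.antisymm
    · intro x hx
      by_cases hxK : x ∈ (K : Set H)
      · have h1A : (1 : H) ∈ (A : Set H) := by rw [hAcoe]; simp
        have := Set.mul_mem_mul hxK h1A
        simpa using this
      · have hxA : x ∈ (A : Set H) := by rw [hAcoe]; exact Or.inl ⟨hx, hxK⟩
        have := Set.mul_mem_mul (PfinOne.one_mem'' K) hxA
        simpa using this
    · calc (K : Set H) * (A : Set H) ⊆ (K : Set H) * (X : Set H) :=
            Set.mul_subset_mul_left hAX
        _ = X := habs'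
  rcases PfinOne.factor_eq hX hfact with h | hA1 | h | hAeq
  · exact hK1 h
  · obtain ⟨a, haX, haK⟩ := PfinOne.not_subset_of_ne hsub hKX
    have haA : a ∈ (A : Set H) := by rw [hAcoe]; exact Or.inl ⟨haX, haK⟩
    rw [hA1] at haA
    have : a = 1 := by simpa using haA
    exact haK (this ▸ (PfinOne.one_mem'' K))
  · exact hKX h
  · obtain ⟨c, hcK, hc1⟩ := PfinOne.exists_ne_one hK1
    have hcX : c ∈ (X : Set H) := hsub hcK
    have : c ∈ (A : Set H) := by rw [hAeq]; exact hcX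
    rw [hAcoe] at this
    rcases this with h | h
    · exact h.2 hcK
    · exact hc1 (by simpa using h)

end AuxPfinOne

/-- an irreducible `X` of `P_{fin,1}(H)` fails to be an atom iff
`X = {1, x}` for some `x ≠ 1` with `x² = 1` or `x² = x`. -/
theorem pfinOne_irreducible_not_atom_iff {H : Type*} [Monoid H]
    (X : PfinOne H) (hX : IsIrredTS X) :
    ¬ IsAtomTS X ↔
      ∃ x : H, x ≠ 1 ∧ (x * x = 1 ∨ x * x = x) ∧ (X : Set H) = {1, x} := by
  have hX1 : X ≠ 1 := fun h => hX.1 (PfinOne.isUnitDivisor_iff.mpr h)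
  constructor
  · intro hna
    have hnu : ¬ IsUnit X := fun h => hX1 (PfinOne.isUnit_iff.mp h)
    have hne : ¬ ∀ b c : PfinOne H, X = b * c → IsUnit b ∨ IsUnit c :=
      fun h => hna ⟨hnu, h⟩
    push_neg at hne
    obtain ⟨B, C, hBC, hB, hC⟩ := hne
    have hB1 : B ≠ 1 := fun h => hB (h ▸ isUnit_one)
    have hC1 : C ≠ 1 := fun h => hC (h ▸ isUnit_one)
    -- First show X * X = X
    have hXsq : X * X = X := by
      rcases PfinOne.factor_eq hX hBC with h | h | h | h
      · exact absurd h hB1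
      · exact absurd h hC1
      · -- B = X, so X = X * C
        rw [h] at hBC
        have hCsub : (C : Set H) ⊆ X := by
          have h2 := PfinOne.subset_mul_right_s12 X C
          rw [← hBC] at h2
          exact h2
        by_cases hCX : C = X
        · rw [hCX] at hBC; exact hBC.symm
        · exact absurd (PfinOne.absorb_right hX hCsub hC1 hCX hBC.symm) not_false
      · -- C = X, so X = B * X
        rw [h] at hBC
        have hBsub : (B : Set H) ⊆ X := by
          have h2 := PfinOne.subset_mul_left_s12 B X
          rw [← hBC] at h2
          exact h2
        by_cases hBX : B = X
        · rw [hBX] at hBC; exact hBC.symm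
        · exact absurd (PfinOne.absorb_left hX hBsub hB1 hBX hBC.symm) not_false
    have hXsq' : (X : Set H) * (X : Set H) = X := PfinOne.coe_mul_eq hXsq
    obtain ⟨x, hxX, hx1⟩ := PfinOne.exists_ne_one hX1
    have hKmem : ({1, x} : Set H) ∈ PfinOne H :=
      mem_PfinOne.mpr ⟨(Set.finite_singleton x).insert 1, by simp⟩
    set K : PfinOne H := ⟨({1, x} : Set H), hKmem⟩ with hKdef
    have hKcoe : (K : Set H) = {1, x} := rfl
    have hKsub : (K : Set H) ⊆ X := by
      intro a ha
      rw [hKcoe] at ha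
      rcases ha with h | h
      · rw [h]; exact (PfinOne.one_mem'' X)
      · rw [Set.mem_singleton_iff] at h; rw [h]; exact hxX
    have hK1 : K ≠ 1 := by
      intro h
      have := PfinOne.eq_one_iff.mp h
      rw [hKcoe] at this
      exact hx1 (by
        have : x ∈ ({1} : Set H) := this ▸ (by simp : x ∈ ({1, x} : Set H))
        simpa using this)
    have hpair : (X : Set H) = {1, x} := by
      refine Set.Subset.antisymm ?_ ?_
      · intro a haX
        by_contra hnotin
        have hKX : K ≠ X := by
          intro h
          have : a ∈ (K : Set H) := h.symm ▸ haX
          rw [hKcoe] at this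
          exact hnotin this
        have hmul : X * K = X := by
          apply Subtype.ext
          show (X : Set H) * (K : Set H) = X
          apply Set.Subset.antisymm
          · calc (X : Set H) * (K : Set H) ⊆ (X : Set H) * (X : Set H) :=
                Set.mul_subset_mul_left hKsub
              _ = X := hXsq'
          · intro b hb
            have := Set.mul_mem_mul hb (PfinOne.one_mem'' K)
            simpa using this
        exact PfinOne.absorb_right hX hKsub hK1 hKX hmul
      · intro a ha
        rcases ha with h | h
        · rw [h]; exact (PfinOne.one_mem'' X)
        · rw [Set.mem_singleton_iff] at h; rw [h]; exact hxX
    have hxx : x * x ∈ ({1, x} : Set H) := by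
      have := Set.mul_mem_mul hxX hxX
      rw [hXsq', hpair] at this
      exact this
    refine ⟨x, hx1, ?_, hpair⟩
    rcases hxx with h | h
    · exact Or.inl h
    · exact Or.inr (by simpa using h)
  · rintro ⟨x, hx1, hxx, hXset⟩
    intro hatom
    have hXsq : X * X = X := by
      apply Subtype.ext
      show (X : Set H) * (X : Set H) = X
      rw [hXset]
      apply Set.Subset.antisymm
      · rintro y hy
        rw [Set.mem_mul] at hy
        obtain ⟨a, ha, b, hb, rfl⟩ := hy
        rcases ha with ha | ha <;> rcases hb with hb | hb <;>
          simp only [Set.mem_singleton_iff, Set.mem_insert_iff] at ha hb ⊢ <;> subst ha <;> subst hb <;>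
          simp [hx1, hxx]
      · intro y hy
        rcases hy with h | h
        · rw [h]
          have := Set.mul_mem_mul (show (1:H) ∈ ({1,x} : Set H) by simp)
            (show (1:H) ∈ ({1,x} : Set H) by simp)
          simpa using this
        · rw [Set.mem_singleton_iff] at h; rw [h]
          have := Set.mul_mem_mul (show (1:H) ∈ ({1,x} : Set H) by simp)
            (show x ∈ ({1,x} : Set H) by simp)
          simpa using this
    have := hatom.2 X X hXsq.symm
    have hXone : X = 1 := by
      rcases this with h | h <;> exact PfinOne.isUnit_iff.mp h
    have : (X : Set H) = {1} := PfinOne.eq_one_iff.mp hXone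
    rw [hXset] at this
    exact hx1 (by
      have hx : x ∈ ({1} : Set H) := this ▸ (by simp : x ∈ ({1, x} : Set H))
      simpa using hx)
end

section
/- Let H be a Dedekind-finite monoid and let A, X, Y be elements of the restricted finitary power monoid P_{fin,×}(H) with A = XAY. If |A| ≥ 3 and max(|X|, |Y|) ≥ 2, then A is not an irreducible element of P_{fin,×}(H). -/
open scoped Pointwise

section Aux

variable {H : Type*} [Monoid H]

lemma card_le_of_dvdTS_pfinTimes {A B : PfinTimes H} (h : DvdTS A B) :
    (A : Set H).ncard ≤ (B : Set H).ncard := by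
  obtain ⟨U, V, hB⟩ := h
  obtain ⟨-, u, hu, huU⟩ := mem_PfinTimes.mp U.2
  obtain ⟨-, v, hv, hvV⟩ := mem_PfinTimes.mp V.2
  have hBfin : (B : Set H).Finite := (mem_PfinTimes.mp B.2).1
  have hBset : (B : Set H) = (U : Set H) * (A : Set H) * (V : Set H) := by
    rw [hB]; rfl
  have hinj : Function.Injective (fun a : H => u * a * v) := by
    intro a b hab
    have h1 : u * a * v = u * b * v := hab
    have h2 : u * a = u * b := hvV.mul_right_cancel h1
    exact huU.mul_left_cancel h2
  have hsub : (fun a : H => u * a * v) '' (A : Set H) ⊆ (B : Set H) := by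
    rintro _ ⟨a, ha, rfl⟩
    rw [hBset]
    exact Set.mul_mem_mul (Set.mul_mem_mul hu ha) hv
  calc (A : Set H).ncard = ((fun a : H => u * a * v) '' (A : Set H)).ncard :=
        (Set.ncard_image_of_injective _ hinj).symm
    _ ≤ (B : Set H).ncard := Set.ncard_le_ncard hsub hBfin

lemma not_isUnitDivisor_pfinTimes {B : PfinTimes H} (h2 : 2 ≤ (B : Set H).ncard) :
    ¬ IsUnitDivisor B := by
  intro hd
  have hle := card_le_of_dvdTS_pfinTimes (A := B) (B := 1) hd
  have hone : ((1 : PfinTimes H) : Set H).ncard = 1 := by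
    have : ((1 : PfinTimes H) : Set H) = {(1 : H)} := Set.singleton_one.symm
    rw [this, Set.ncard_singleton]
  omega

lemma not_dvdTS_of_card_lt {A B : PfinTimes H}
    (h : (B : Set H).ncard < (A : Set H).ncard) : ¬ DvdTS A B := fun hd =>
  absurd (card_le_of_dvdTS_pfinTimes hd) (not_le.mpr h)

lemma not_irred_right_pfinTimes (A : PfinTimes H) (hA : 3 ≤ (A : Set H).ncard)
    {y : H} (hy : y ≠ 1) (hAy : ∀ a ∈ (A : Set H), a * y ∈ (A : Set H)) :
    ¬ IsIrredTS A := by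
  obtain ⟨hAfin, u, huA, huU⟩ := mem_PfinTimes.mp A.2
  set a : H := u * y with ha_def
  have haA : a ∈ (A : Set H) := hAy u huA
  have hau : a ≠ u := by
    intro h
    exact hy (huU.mul_left_cancel (by rw [mul_one]; exact h))
  set Bs : Set H := (A : Set H) \ {a} with hBs_def
  have huB : u ∈ Bs := ⟨huA, by simp [hau.symm]⟩
  have hBfin : Bs.Finite := hAfin.diff
  have hBmem : Bs ∈ PfinTimes H := ⟨hBfin, u, huB, huU⟩
  set B : PfinTimes H := ⟨Bs, hBmem⟩ with hB_def
  set Cs : Set H := {1, y} with hCs_def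
  have hCmem : Cs ∈ PfinTimes H :=
    ⟨(Set.finite_singleton y).insert 1, 1, Or.inl rfl, isUnit_one⟩
  set C : PfinTimes H := ⟨Cs, hCmem⟩ with hC_def
  have hprod_set : Bs * Cs = (A : Set H) := by
    apply Set.Subset.antisymm
    · rintro z hz
      rw [Set.mem_mul] at hz
      obtain ⟨b, hb, c, hc, rfl⟩ := hz
      rcases hc with rfl | hc
      · rw [mul_one]; exact hb.1
      · rw [Set.mem_singleton_iff] at hc; subst hc
        exact hAy b hb.1
    · intro z hz
      by_cases hza : z = a
      · subst hza
        exact ⟨u, huB, y, Or.inr rfl, rfl⟩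
      · exact ⟨z, ⟨hz, hza⟩, 1, Or.inl rfl, mul_one z⟩
  have hprod : A = B * C := by
    apply Subtype.ext
    exact hprod_set.symm
  have hBcard : Bs.ncard = (A : Set H).ncard - 1 :=
    Set.ncard_diff_singleton_of_mem haA
  have hCcard : Cs.ncard = 2 := Set.ncard_pair (Ne.symm hy)
  rintro ⟨-, hni⟩
  refine hni ⟨B, C, hprod, ⟨⟨1, C, by rw [one_mul]; exact hprod⟩, ?_⟩,
    ⟨⟨B, 1, by rw [mul_one]; exact hprod⟩, ?_⟩, ?_, ?_⟩
  · exact not_dvdTS_of_card_lt (by simp only [hB_def]; omega)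
  · exact not_dvdTS_of_card_lt (by simp only [hC_def]; omega)
  · exact not_isUnitDivisor_pfinTimes (by simp only [hB_def]; omega)
  · exact not_isUnitDivisor_pfinTimes (by simp only [hC_def]; omega)

lemma not_irred_left_pfinTimes (A : PfinTimes H) (hA : 3 ≤ (A : Set H).ncard)
    {x : H} (hx : x ≠ 1) (hAx : ∀ a ∈ (A : Set H), x * a ∈ (A : Set H)) :
    ¬ IsIrredTS A := by
  obtain ⟨hAfin, u, huA, huU⟩ := mem_PfinTimes.mp A.2
  set a : H := x * u with ha_def
  have haA : a ∈ (A : Set H) := hAx u huA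
  have hau : a ≠ u := by
    intro h
    exact hx (huU.mul_right_cancel (by rw [one_mul]; exact h))
  set Bs : Set H := (A : Set H) \ {a} with hBs_def
  have huB : u ∈ Bs := ⟨huA, by simp [hau.symm]⟩
  have hBfin : Bs.Finite := hAfin.diff
  have hBmem : Bs ∈ PfinTimes H := ⟨hBfin, u, huB, huU⟩
  set B : PfinTimes H := ⟨Bs, hBmem⟩ with hB_def
  set Cs : Set H := {1, x} with hCs_def
  have hCmem : Cs ∈ PfinTimes H :=
    ⟨(Set.finite_singleton x).insert 1, 1, Or.inl rfl, isUnit_one⟩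
  set C : PfinTimes H := ⟨Cs, hCmem⟩ with hC_def
  have hprod_set : Cs * Bs = (A : Set H) := by
    apply Set.Subset.antisymm
    · rintro z hz
      rw [Set.mem_mul] at hz
      obtain ⟨c, hc, b, hb, rfl⟩ := hz
      rcases hc with rfl | hc
      · rw [one_mul]; exact hb.1
      · rw [Set.mem_singleton_iff] at hc; subst hc
        exact hAx b hb.1
    · intro z hz
      by_cases hza : z = a
      · subst hza
        exact ⟨x, Or.inr rfl, u, huB, rfl⟩
      · exact ⟨1, Or.inl rfl, z, ⟨hz, hza⟩, one_mul z⟩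
  have hprod : A = C * B := by
    apply Subtype.ext
    exact hprod_set.symm
  have hBcard : Bs.ncard = (A : Set H).ncard - 1 :=
    Set.ncard_diff_singleton_of_mem haA
  have hCcard : Cs.ncard = 2 := Set.ncard_pair (Ne.symm hx)
  rintro ⟨-, hni⟩
  refine hni ⟨C, B, hprod, ⟨⟨1, B, by rw [one_mul]; exact hprod⟩, ?_⟩,
    ⟨⟨C, 1, by rw [mul_one]; exact hprod⟩, ?_⟩, ?_, ?_⟩
  · exact not_dvdTS_of_card_lt (by simp only [hC_def]; omega)
  · exact not_dvdTS_of_card_lt (by simp only [hB_def]; omega)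
  · exact not_isUnitDivisor_pfinTimes (by simp only [hC_def]; omega)
  · exact not_isUnitDivisor_pfinTimes (by simp only [hB_def]; omega)

end Aux

/-- if `H` is Dedekind-finite and `A = X * A * Y` in `P_{fin,×}(H)` with
`|A| ≥ 3` and `max(|X|, |Y|) ≥ 2`, then `A` is not irreducible in `P_{fin,×}(H)`. -/
theorem pfinTimes_not_irreducible_of_stable {H : Type*} [Monoid H]
    (hH : DedekindFiniteM H) (A X Y : PfinTimes H) (h : A = X * A * Y)
    (hA : 3 ≤ (A : Set H).ncard) (hXY : 2 ≤ max (X : Set H).ncard (Y : Set H).ncard) :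
    ¬ IsIrredTS A := by
  obtain ⟨hAfin, a0, ha0A, ha0U⟩ := mem_PfinTimes.mp A.2
  obtain ⟨-, x0, hx0, hx0U⟩ := mem_PfinTimes.mp X.2
  obtain ⟨-, y0, hy0, hy0U⟩ := mem_PfinTimes.mp Y.2
  have hset : (A : Set H) = (X : Set H) * (A : Set H) * (Y : Set H) := by
    conv_lhs => rw [h]
    rfl
  obtain ⟨xu, rfl⟩ := hx0U
  obtain ⟨yu, rfl⟩ := hy0U
  have hinj : Function.Injective (fun b : H => (xu : H) * b * (yu : H)) := by
    intro b c hbc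
    have h1 : (xu : H) * b * (yu : H) = (xu : H) * c * (yu : H) := hbc
    have h2 : (xu : H) * b = (xu : H) * c := yu.isUnit.mul_right_cancel h1
    exact xu.isUnit.mul_left_cancel h2
  have hsub : (fun b : H => (xu : H) * b * (yu : H)) '' (A : Set H) ⊆ (A : Set H) := by
    rintro _ ⟨b, hb, rfl⟩
    rw [hset]
    exact Set.mul_mem_mul (Set.mul_mem_mul hx0 hb) hy0
  have himg : (fun b : H => (xu : H) * b * (yu : H)) '' (A : Set H) = (A : Set H) :=
    Set.eq_of_subset_of_ncard_le hsub
      (le_of_eq (Set.ncard_image_of_injective _ hinj).symm) hAfin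
  rcases le_max_iff.mp hXY with hX2 | hY2
  · -- case 2 ≤ ncard X
    obtain ⟨x1, hx1, hx1ne⟩ :=
      Set.exists_ne_of_one_lt_ncard (by omega : 1 < (X : Set H).ncard) (xu : H)
    have hx : ((xu⁻¹ : Hˣ) : H) * x1 ≠ 1 := by
      intro heq
      apply hx1ne
      calc x1 = (xu : H) * (((xu⁻¹ : Hˣ) : H) * x1) := by
              rw [← mul_assoc, Units.mul_inv, one_mul]
        _ = (xu : H) * 1 := by rw [heq]
        _ = (xu : H) := mul_one _
    refine not_irred_left_pfinTimes A hA hx ?_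
    intro b hb
    have h1 : x1 * b * (yu : H) ∈ (A : Set H) := by
      rw [hset]
      exact Set.mul_mem_mul (Set.mul_mem_mul hx1 hb) hy0
    rw [← himg] at h1
    obtain ⟨c, hc, hceq⟩ := h1
    have h2 : (xu : H) * c = x1 * b := yu.isUnit.mul_right_cancel hceq
    have h3 : ((xu⁻¹ : Hˣ) : H) * x1 * b = c := by
      rw [mul_assoc, ← h2, ← mul_assoc, Units.inv_mul, one_mul]
    rw [h3]
    exact hc
  · -- case 2 ≤ ncard Y
    obtain ⟨y1, hy1, hy1ne⟩ :=
      Set.exists_ne_of_one_lt_ncard (by omega : 1 < (Y : Set H).ncard) (yu : H)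
    have hy : y1 * ((yu⁻¹ : Hˣ) : H) ≠ 1 := by
      intro heq
      apply hy1ne
      calc y1 = y1 * ((yu⁻¹ : Hˣ) : H) * (yu : H) := by
              rw [mul_assoc, Units.inv_mul, mul_one]
        _ = 1 * (yu : H) := by rw [heq]
        _ = (yu : H) := one_mul _
    refine not_irred_right_pfinTimes A hA hy ?_
    intro b hb
    have h1 : (xu : H) * b * y1 ∈ (A : Set H) := by
      rw [hset]
      exact Set.mul_mem_mul (Set.mul_mem_mul hx0 hb) hy1
    rw [← himg] at h1
    obtain ⟨c, hc, hceq⟩ := h1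
    have h2 : c * (yu : H) = b * y1 := by
      have h3 : (xu : H) * (c * (yu : H)) = (xu : H) * (b * y1) := by
        rw [← mul_assoc, ← mul_assoc]; exact hceq
      exact xu.isUnit.mul_left_cancel h3
    have h4 : b * (y1 * ((yu⁻¹ : Hˣ) : H)) = c := by
      rw [← mul_assoc, ← h2, mul_assoc, Units.mul_inv, mul_one]
    rw [h4]
    exact hc
end

section
/- Let H be a Dedekind-finite monoid, let A be an irreducible element of the restricted finitary power monoid P_{fin,×}(H), and let u, v be units of H with 1_H ∈ uAv. Then uAv is an irreducible element of the reduced finitary power monoid P_{fin,1}(H). -/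
open scoped Pointwise

section Aux

lemma regroup4 {M : Type*} [Monoid M] (a b c d x : M) :
    a * (b * x * c) * d = (a * b) * x * (c * d) := by
  simp only [mul_assoc]

lemma sandwichTS {M : Type*} [Monoid M] {a b c d : M} (x : M) (h1 : a * b = 1) (h2 : c * d = 1) :
    a * (b * x * c) * d = x := by
  simp only [mul_assoc]; rw [h2, mul_one, ← mul_assoc, h1, one_mul]

lemma mid_cancelTS {M : Type*} [Monoid M] (a b c d x y : M) (h : b * c = 1) :
    (a * x * b) * (c * y * d) = a * (x * y) * d := by
  simp only [mul_assoc]; rw [← mul_assoc b c, h, one_mul]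

lemma rearrangeTS {M : Type*} [Monoid M] (p U A V r p' B q' : M) (hA : p' * B * q' = A) :
    p * (U * A * V) * r = (p * U * p') * B * (q' * V * r) := by
  rw [← hA]; simp only [mul_assoc]

variable {H : Type*} [Monoid H]

open scoped Pointwise in
lemma image_eq_singleton_mulTS (u v : H) (S : Set H) :
    (fun a => u * a * v) '' S = {u} * S * {v} := by
  rw [Set.mul_singleton, Set.singleton_mul, Set.image_image]

open scoped Pointwise in
lemma singmul_leftTS (w : Hˣ) : ({(↑w⁻¹ : H)} : Set H) * {(w : H)} = 1 := by
  simp [Set.singleton_mul_singleton, Set.singleton_one]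

open scoped Pointwise in
lemma singmul_rightTS (w : Hˣ) : ({(w : H)} : Set H) * {(↑w⁻¹ : H)} = 1 := by
  simp [Set.singleton_mul_singleton, Set.singleton_one]

lemma subset_of_dvdTS_pfinOne {C B : PfinOne H} (h : DvdTS C B) :
    (C : Set H) ⊆ (B : Set H) := by
  obtain ⟨P, Q, hPQ⟩ := h
  have h' : (B : Set H) = (P : Set H) * C * Q := by
    simpa using Subtype.ext_iff.mp hPQ
  intro x hx
  rw [h']
  have : (1 : H) * x * 1 ∈ (P : Set H) * C * Q :=
    Set.mul_mem_mul (Set.mul_mem_mul (mem_PfinOne.mp P.2).2 hx) (mem_PfinOne.mp Q.2).2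
  simpa using this

lemma pfinTimes_unitDivisor_singleton (hH : DedekindFiniteM H) {X : PfinTimes H}
    (h : IsUnitDivisor X) : ∃ x : H, (X : Set H) = {x} := by
  obtain ⟨U, V, hUV⟩ := h
  have hs : (1 : Set H) = (U : Set H) * X * V := by
    simpa using Subtype.ext_iff.mp hUV
  obtain ⟨p, hp, -⟩ := (mem_PfinTimes.mp U.2).2
  obtain ⟨q, hq, -⟩ := (mem_PfinTimes.mp V.2).2
  obtain ⟨x₀, hx₀, -⟩ := (mem_PfinTimes.mp X.2).2
  have key : ∀ x ∈ (X : Set H), (q * p) * x = 1 ∧ x * (q * p) = 1 := by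
    intro x hx
    have hmem : p * x * q ∈ (U : Set H) * X * V :=
      Set.mul_mem_mul (Set.mul_mem_mul hp hx) hq
    rw [← hs] at hmem
    have h1 : p * x * q = 1 := hmem
    have h2 : x * (q * p) = 1 := by
      have := hH p (x * q) (by rw [← mul_assoc]; exact h1)
      rw [mul_assoc] at this; exact this
    exact ⟨hH x (q * p) h2, h2⟩
  refine ⟨x₀, Set.eq_singleton_iff_unique_mem.mpr ⟨hx₀, ?_⟩⟩
  intro y hy
  calc y = y * ((q * p) * x₀) := by rw [(key x₀ hx₀).1, mul_one]
    _ = (y * (q * p)) * x₀ := (mul_assoc y (q * p) x₀).symm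
    _ = x₀ := by rw [(key y hy).2, one_mul]

open scoped Pointwise in
lemma key_dvdTS {B₀ C₀ P₀ Q₀ : Set H} (hBfin : B₀.Finite) (hCB : C₀ ⊆ B₀)
    (hC : C₀ = P₀ * B₀ * Q₀) (hPfin : P₀.Finite) (hQfin : Q₀.Finite)
    (hP : ∃ w ∈ P₀, IsUnit w) (hQ : ∃ z ∈ Q₀, IsUnit z) :
    ∃ P Q : Set H, P.Finite ∧ (1 : H) ∈ P ∧ Q.Finite ∧ (1 : H) ∈ Q ∧ C₀ = P * B₀ * Q := by
  obtain ⟨w, hwP, w', rfl⟩ := hP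
  obtain ⟨z, hzQ, z', rfl⟩ := hQ
  have hsub : {(w' : H)} * B₀ * {(z' : H)} ⊆ B₀ := by
    refine (Set.mul_subset_mul (Set.mul_subset_mul (Set.singleton_subset_iff.mpr hwP)
      subset_rfl) (Set.singleton_subset_iff.mpr hzQ)).trans ?_
    rw [← hC]; exact hCB
  have himg : (fun b => (w' : H) * b * z') '' B₀ = {(w' : H)} * B₀ * {(z' : H)} :=
    image_eq_singleton_mulTS _ _ _
  have hinj : Function.Injective (fun b => (w' : H) * b * z') := by
    intro a b hab
    have := congrArg (fun t => (↑w'⁻¹ : H) * t * ↑z'⁻¹) hab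
    simpa [mul_assoc] using this
  have heq : {(w' : H)} * B₀ * {(z' : H)} = B₀ := by
    rw [← himg]
    exact Set.eq_of_subset_of_ncard_le (himg ▸ hsub)
      (le_of_eq (Set.ncard_image_of_injective _ hinj).symm) hBfin
  have heq' : {(↑w'⁻¹ : H)} * B₀ * {(↑z'⁻¹ : H)} = B₀ := by
    conv_lhs => rw [← heq]
    exact sandwichTS _ (singmul_leftTS w') (singmul_rightTS z')
  refine ⟨P₀ * {(↑w'⁻¹ : H)}, {(↑z'⁻¹ : H)} * Q₀, hPfin.mul (Set.finite_singleton _), ?_,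
    (Set.finite_singleton _).mul hQfin, ?_, ?_⟩
  · have : (↑w' : H) * ↑w'⁻¹ ∈ P₀ * {(↑w'⁻¹ : H)} := Set.mul_mem_mul hwP rfl
    simpa using this
  · have : (↑z'⁻¹ : H) * ↑z' ∈ ({(↑z'⁻¹ : H)} : Set H) * Q₀ := Set.mul_mem_mul rfl hzQ
    simpa using this
  · rw [hC]
    conv_lhs => rw [← heq']
    exact regroup4 _ _ _ _ _

end Aux

/-- if `H` is Dedekind-finite, `A` is irreducible in `P_{fin,×}(H)`, and
`u, v` are units with `1 ∈ uAv`, then `uAv` is irreducible in `P_{fin,1}(H)`. -/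
theorem pfinOne_irreducible_of_pfinTimes_irreducible {H : Type*} [Monoid H]
    (hH : DedekindFiniteM H) (A : PfinTimes H) (hA : IsIrredTS A)
    (u v : H) (hu : IsUnit u) (hv : IsUnit v)
    (h1 : (1 : H) ∈ (fun a => u * a * v) '' (A : Set H)) :
    IsIrredTS (⟨(fun a => u * a * v) '' (A : Set H),
      mem_PfinOne.mpr ⟨((mem_PfinTimes.mp A.2).1).image _, h1⟩⟩ : PfinOne H) := by
  obtain ⟨u', rfl⟩ := hu
  obtain ⟨v', rfl⟩ := hv
  set B₀ : Set H := (fun a => (u' : H) * a * v') '' (A : Set H) with hB₀def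
  have hBset : B₀ = {(u' : H)} * (A : Set H) * {(v' : H)} := image_eq_singleton_mulTS _ _ _
  have hAset : {(↑u'⁻¹ : H)} * B₀ * {(↑v'⁻¹ : H)} = (A : Set H) := by
    rw [hBset]
    exact sandwichTS _ (singmul_leftTS u') (singmul_rightTS v')
  have hBfin : B₀.Finite := ((mem_PfinTimes.mp A.2).1).image _
  have hB1 : (1 : H) ∈ B₀ := h1
  constructor
  · rintro ⟨P, Q, hPQ⟩
    have hset : (1 : Set H) = (P : Set H) * B₀ * (Q : Set H) := by
      simpa using Subtype.ext_iff.mp hPQ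
    have hBsub : B₀ ⊆ {1} := by
      intro x hx
      have : (1 : H) * x * 1 ∈ (P : Set H) * B₀ * (Q : Set H) :=
        Set.mul_mem_mul (Set.mul_mem_mul (mem_PfinOne.mp P.2).2 hx) (mem_PfinOne.mp Q.2).2
      rw [← hset] at this
      simpa using this
    have hBeq : B₀ = {1} := Set.Subset.antisymm hBsub (Set.singleton_subset_iff.mpr hB1)
    apply hA.1
    refine ⟨⟨{(u' : H)}, mem_PfinTimes.mpr ⟨Set.finite_singleton _, ↑u', rfl, u'.isUnit⟩⟩,
      ⟨{(v' : H)}, mem_PfinTimes.mpr ⟨Set.finite_singleton _, ↑v', rfl, v'.isUnit⟩⟩, ?_⟩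
    apply Subtype.ext
    show (1 : Set H) = {(u' : H)} * (A : Set H) * {(v' : H)}
    rw [← hBset, hBeq, Set.singleton_one]
  · rintro ⟨C, D, hBCD, hCp, hDp, hC, hD⟩
    have hC1 : (1 : H) ∈ (C : Set H) := (mem_PfinOne.mp C.2).2
    have hD1 : (1 : H) ∈ (D : Set H) := (mem_PfinOne.mp D.2).2
    have hCfin : (C : Set H).Finite := (mem_PfinOne.mp C.2).1
    have hDfin : (D : Set H).Finite := (mem_PfinOne.mp D.2).1
    have hCDset : (C : Set H) * (D : Set H) = B₀ := by
      simpa using (Subtype.ext_iff.mp hBCD).symm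
    set C' : PfinTimes H := ⟨{(↑u'⁻¹ : H)} * (C : Set H) * {(u' : H)},
      mem_PfinTimes.mpr ⟨((Set.finite_singleton _).mul hCfin).mul (Set.finite_singleton _),
        ↑u'⁻¹ * 1 * ↑u', Set.mul_mem_mul (Set.mul_mem_mul rfl hC1) rfl, by simp⟩⟩ with hC'def
    set D' : PfinTimes H := ⟨{(↑u'⁻¹ : H)} * (D : Set H) * {(↑v'⁻¹ : H)},
      mem_PfinTimes.mpr ⟨((Set.finite_singleton _).mul hDfin).mul (Set.finite_singleton _),
        ↑u'⁻¹ * 1 * ↑v'⁻¹, Set.mul_mem_mul (Set.mul_mem_mul rfl hD1) rfl,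
        by simp⟩⟩ with hD'def
    have hCD' : C' * D' = A := by
      apply Subtype.ext
      show ({(↑u'⁻¹ : H)} * (C : Set H) * {(u' : H)}) *
        ({(↑u'⁻¹ : H)} * (D : Set H) * {(↑v'⁻¹ : H)}) = (A : Set H)
      rw [mid_cancelTS _ _ _ _ _ _ (singmul_rightTS u'), hCDset, hAset]
    have hCsub : (C : Set H) ⊆ B₀ := subset_of_dvdTS_pfinOne hCp.1
    have hDsub : (D : Set H) ⊆ B₀ := subset_of_dvdTS_pfinOne hDp.1
    by_cases hdvdC : DvdTS A C'
    · obtain ⟨U, V, hUV⟩ := hdvdC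
      have hset : {(↑u'⁻¹ : H)} * (C : Set H) * {(u' : H)} =
          (U : Set H) * (A : Set H) * (V : Set H) := by
        exact Subtype.ext_iff.mp hUV
      have hCset : (C : Set H) =
          {(u' : H)} * ((U : Set H) * (A : Set H) * (V : Set H)) * {(↑u'⁻¹ : H)} := by
        rw [← hset]
        exact (sandwichTS _ (singmul_rightTS u') (singmul_rightTS u')).symm
      have hCset2 : (C : Set H) = ({(u' : H)} * (U : Set H) * {(↑u'⁻¹ : H)}) * B₀ *
          (({(↑v'⁻¹ : H)} * (V : Set H)) * {(↑u'⁻¹ : H)}) := by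
        rw [hCset]
        have := rearrangeTS {(u' : H)} (U : Set H) (A : Set H) (V : Set H)
          {(↑u'⁻¹ : H)} {(↑u'⁻¹ : H)} B₀ {(↑v'⁻¹ : H)} hAset
        rw [this]
      obtain ⟨w₀, hw₀, hw₀u⟩ := (mem_PfinTimes.mp U.2).2
      obtain ⟨z₀, hz₀, hz₀u⟩ := (mem_PfinTimes.mp V.2).2
      obtain ⟨P, Q, hPf, hP1, hQf, hQ1, hCPQ⟩ := key_dvdTS hBfin hCsub hCset2
        (((Set.finite_singleton _).mul (mem_PfinTimes.mp U.2).1).mul (Set.finite_singleton _))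
        (((Set.finite_singleton _).mul (mem_PfinTimes.mp V.2).1).mul (Set.finite_singleton _))
        ⟨↑u' * w₀ * ↑u'⁻¹, Set.mul_mem_mul (Set.mul_mem_mul rfl hw₀) rfl,
          (u'.isUnit.mul hw₀u).mul u'⁻¹.isUnit⟩
        ⟨↑v'⁻¹ * z₀ * ↑u'⁻¹, Set.mul_mem_mul (Set.mul_mem_mul rfl hz₀) rfl,
          (v'⁻¹.isUnit.mul hz₀u).mul u'⁻¹.isUnit⟩
      exact hCp.2 ⟨⟨P, mem_PfinOne.mpr ⟨hPf, hP1⟩⟩, ⟨Q, mem_PfinOne.mpr ⟨hQf, hQ1⟩⟩,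
        Subtype.ext (by simpa using hCPQ)⟩
    by_cases hdvdD : DvdTS A D'
    · obtain ⟨U, V, hUV⟩ := hdvdD
      have hset : {(↑u'⁻¹ : H)} * (D : Set H) * {(↑v'⁻¹ : H)} =
          (U : Set H) * (A : Set H) * (V : Set H) := by
        exact Subtype.ext_iff.mp hUV
      have hDset : (D : Set H) =
          {(u' : H)} * ((U : Set H) * (A : Set H) * (V : Set H)) * {(v' : H)} := by
        rw [← hset]
        exact (sandwichTS _ (singmul_rightTS u') (singmul_leftTS v')).symm
      have hDset2 : (D : Set H) = ({(u' : H)} * (U : Set H) * {(↑u'⁻¹ : H)}) * B₀ *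
          (({(↑v'⁻¹ : H)} * (V : Set H)) * {(v' : H)}) := by
        rw [hDset]
        have := rearrangeTS {(u' : H)} (U : Set H) (A : Set H) (V : Set H)
          {(v' : H)} {(↑u'⁻¹ : H)} B₀ {(↑v'⁻¹ : H)} hAset
        rw [this]
      obtain ⟨w₀, hw₀, hw₀u⟩ := (mem_PfinTimes.mp U.2).2
      obtain ⟨z₀, hz₀, hz₀u⟩ := (mem_PfinTimes.mp V.2).2
      obtain ⟨P, Q, hPf, hP1, hQf, hQ1, hDPQ⟩ := key_dvdTS hBfin hDsub hDset2
        (((Set.finite_singleton _).mul (mem_PfinTimes.mp U.2).1).mul (Set.finite_singleton _))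
        (((Set.finite_singleton _).mul (mem_PfinTimes.mp V.2).1).mul (Set.finite_singleton _))
        ⟨↑u' * w₀ * ↑u'⁻¹, Set.mul_mem_mul (Set.mul_mem_mul rfl hw₀) rfl,
          (u'.isUnit.mul hw₀u).mul u'⁻¹.isUnit⟩
        ⟨↑v'⁻¹ * z₀ * ↑v', Set.mul_mem_mul (Set.mul_mem_mul rfl hz₀) rfl,
          (v'⁻¹.isUnit.mul hz₀u).mul v'.isUnit⟩
      exact hDp.2 ⟨⟨P, mem_PfinOne.mpr ⟨hPf, hP1⟩⟩, ⟨Q, mem_PfinOne.mpr ⟨hQf, hQ1⟩⟩,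
        Subtype.ext (by simpa using hDPQ)⟩
    by_cases hUC : IsUnitDivisor C'
    · obtain ⟨x, hx⟩ := pfinTimes_unitDivisor_singleton hH hUC
      have hx' : {(↑u'⁻¹ : H)} * (C : Set H) * {(u' : H)} = {x} := hx
      have hCx : (C : Set H) = {(u' : H) * x * ↑u'⁻¹} := by
        have : (C : Set H) = {(u' : H)} * ({(↑u'⁻¹ : H)} * (C : Set H) * {(u' : H)}) *
            {(↑u'⁻¹ : H)} :=
          (sandwichTS _ (singmul_rightTS u') (singmul_rightTS u')).symm
        rw [this, hx', Set.singleton_mul_singleton, Set.singleton_mul_singleton]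
      have hCone : (C : Set H) = {1} := by
        rw [hCx]
        rw [hCx] at hC1
        simp only [Set.mem_singleton_iff] at hC1
        rw [← hC1]
      refine hC ⟨1, 1, ?_⟩
      apply Subtype.ext
      show (1 : Set H) = 1 * (C : Set H) * 1
      rw [one_mul, mul_one, hCone, Set.singleton_one]
    by_cases hUD : IsUnitDivisor D'
    · obtain ⟨x, hx⟩ := pfinTimes_unitDivisor_singleton hH hUD
      have hx' : {(↑u'⁻¹ : H)} * (D : Set H) * {(↑v'⁻¹ : H)} = {x} := hx
      have hDx : (D : Set H) = {(u' : H) * x * ↑v'} := by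
        have : (D : Set H) = {(u' : H)} * ({(↑u'⁻¹ : H)} * (D : Set H) * {(↑v'⁻¹ : H)}) *
            {(v' : H)} :=
          (sandwichTS _ (singmul_rightTS u') (singmul_leftTS v')).symm
        rw [this, hx', Set.singleton_mul_singleton, Set.singleton_mul_singleton]
      have hDone : (D : Set H) = {1} := by
        rw [hDx]
        rw [hDx] at hD1
        simp only [Set.mem_singleton_iff] at hD1
        rw [← hD1]
      refine hD ⟨1, 1, ?_⟩
      apply Subtype.ext
      show (1 : Set H) = 1 * (D : Set H) * 1
      rw [one_mul, mul_one, hDone, Set.singleton_one]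
    exact hA.2 ⟨C', D', hCD'.symm,
      ⟨⟨1, D', by rw [one_mul]; exact hCD'.symm⟩, hdvdC⟩,
      ⟨⟨C', 1, by rw [mul_one]; exact hCD'.symm⟩, hdvdD⟩, hUC, hUD⟩
end

section
/- Let H be a Dedekind-finite monoid. For all units u, v of H and every irreducible element A of the reduced finitary power monoid P_{fin,1}(H), the set uAv is an irreducible element of the restricted finitary power monoid P_{fin,×}(H). -/
open scoped Pointwise

/-! If `A = B * C` in `P_{fin,×}(H)` with `1 ∈ A`, then `1 = β * γ` for some `β ∈ B`,
`γ ∈ C`; by Dedekind-finiteness `β` and `γ = β⁻¹` are units, so `A = (B γ) * (β C)` is a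
factorization in `P_{fin,1}(H)` whose factors are associated with `B` and `C`. Hence the
inclusion `P_{fin,1}(H) ≤ P_{fin,×}(H)` preserves irreducibility, and so does multiplying by
the units `{u}` and `{v}` of `P_{fin,×}(H)`. -/

section Divisibility

variable {M N : Type*} [Monoid M] [Monoid N]

theorem DvdTS.refl (x : M) : DvdTS x x := ⟨1, 1, by simp⟩

theorem DvdTS.trans {x y z : M} : DvdTS x y → DvdTS y z → DvdTS x z
  | ⟨a, b, hy⟩, ⟨c, d, hz⟩ => ⟨c * a, b * d, by rw [hz, hy]; simp only [mul_assoc]⟩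

theorem DvdTS.map (f : M →* N) {x y : M} : DvdTS x y → DvdTS (f x) (f y)
  | ⟨a, b, h⟩ => ⟨f a, f b, by rw [h, map_mul, map_mul]⟩

theorem IsUnitDivisor.map (f : M →* N) {x : M} (h : IsUnitDivisor x) : IsUnitDivisor (f x) := by
  simpa only [IsUnitDivisor, map_one] using DvdTS.map f h

theorem isUnitDivisor_one : IsUnitDivisor (1 : M) := DvdTS.refl 1

theorem dvdTS_mul_right (x y : M) : DvdTS x (x * y) := ⟨1, y, by rw [one_mul]⟩

theorem dvdTS_mul_left (x y : M) : DvdTS y (x * y) := ⟨x, 1, by rw [mul_one]⟩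

theorem dvdTS_mul_mul (u x v : M) : DvdTS x (u * x * v) := ⟨u, v, rfl⟩

theorem mul_mul_dvdTS_of_isUnit {u x v : M} (hu : IsUnit u) (hv : IsUnit v) :
    DvdTS (u * x * v) x := by
  obtain ⟨u, rfl⟩ := hu
  obtain ⟨v, rfl⟩ := hv
  exact ⟨↑u⁻¹, ↑v⁻¹, by simp [mul_assoc]⟩

theorem IsIrredTS.of_lift {a : N} (ha : IsIrredTS a) (f : N →* M) {x : M}
    (hx : ¬ IsUnitDivisor x) (hxa : DvdTS x (f a))
    (hlift : ∀ b c, x = b * c → ∃ b' c', a = b' * c' ∧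
      DvdTS b (f b') ∧ DvdTS (f b') b ∧ DvdTS c (f c') ∧ DvdTS (f c') c) :
    IsIrredTS x := by
  refine ⟨hx, ?_⟩
  rintro ⟨b, c, hbc, ⟨-, hxb⟩, ⟨-, hxc⟩, hb, hc⟩
  obtain ⟨b', c', rfl, hbb', hb'b, hcc', hc'c⟩ := hlift b c hbc
  refine ha.2 ⟨b', c', rfl, ⟨dvdTS_mul_right b' c', fun h => hxb ?_⟩,
    ⟨dvdTS_mul_left b' c', fun h => hxc ?_⟩, fun h => hb ?_, fun h => hc ?_⟩
  · exact hxa.trans ((h.map f).trans hb'b)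
  · exact hxa.trans ((h.map f).trans hc'c)
  · exact hbb'.trans (h.map f)
  · exact hcc'.trans (h.map f)

theorem IsIrredTS.mul_mul_of_isUnit {a u v : M} (ha : IsIrredTS a) (hu : IsUnit u)
    (hv : IsUnit v) : IsIrredTS (u * a * v) := by
  refine ha.of_lift (MonoidHom.id M) (fun h => ha.1 ((dvdTS_mul_mul u a v).trans h))
    (mul_mul_dvdTS_of_isUnit hu hv) fun b c hbc => ?_
  obtain ⟨u, rfl⟩ := hu
  obtain ⟨v, rfl⟩ := hv
  refine ⟨↑u⁻¹ * b * 1, 1 * c * ↑v⁻¹, ?_, dvdTS_mul_mul _ b _,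
    mul_mul_dvdTS_of_isUnit (Units.isUnit _) isUnit_one, dvdTS_mul_mul _ c _,
    mul_mul_dvdTS_of_isUnit isUnit_one (Units.isUnit _)⟩
  calc a = ↑u⁻¹ * (↑u * a * ↑v) * ↑v⁻¹ := by simp [mul_assoc]
    _ = ↑u⁻¹ * b * 1 * (1 * c * ↑v⁻¹) := by rw [hbc]; simp [mul_assoc]

end Divisibility

namespace DedekindFiniteM

variable {H : Type*} [Monoid H]

theorem isUnit_left (hH : DedekindFiniteM H) {x y : H} (h : x * y = 1) : IsUnit x :=
  isUnit_iff_exists.mpr ⟨y, h, hH x y h⟩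

theorem isUnit_right (hH : DedekindFiniteM H) {x y : H} (h : x * y = 1) : IsUnit y :=
  isUnit_iff_exists.mpr ⟨x, hH x y h, h⟩

theorem eq_singleton_of_mul_mul_eq_one (hH : DedekindFiniteM H) {B X C : Set H}
    (h : B * X * C = 1) {x : H} (hx : x ∈ X) : X = {x} := by
  have hmem : ∀ {b y c}, b ∈ B → y ∈ X → c ∈ C → b * y * c = 1 := fun hb hy hc =>
    Set.mem_one.mp (h ▸ Set.mul_mem_mul (Set.mul_mem_mul hb hy) hc)
  obtain ⟨-, ⟨b, hb, -, -, -⟩, c, hc, -⟩ := Set.mem_mul.mp (h.symm ▸ Set.one_mem_one)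
  have hbxc := hmem hb hx hc
  have hbu : IsUnit b := hH.isUnit_left (y := x * c) (by rwa [← mul_assoc])
  have hcu : IsUnit c := hH.isUnit_right hbxc
  refine Set.eq_singleton_iff_unique_mem.mpr ⟨hx, fun y hy => ?_⟩
  exact hbu.mul_left_cancel (hcu.mul_right_cancel ((hmem hb hy hc).trans hbxc.symm))

end DedekindFiniteM

section PowerMonoids

variable {H : Type*} [Monoid H]

def PfinTimes.singleton {u : H} (hu : IsUnit u) : PfinTimes H :=
  ⟨{u}, Set.finite_singleton u, u, rfl, hu⟩

theorem PfinTimes.isUnit_singleton {u : H} (hu : IsUnit u) :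
    IsUnit (PfinTimes.singleton hu) := by
  obtain ⟨u, rfl⟩ := hu
  refine isUnit_iff_exists.mpr ⟨PfinTimes.singleton (Units.isUnit u⁻¹), ?_, ?_⟩ <;>
    exact Subtype.ext (by simp [PfinTimes.singleton, Set.singleton_one])

theorem PfinOne.eq_one_of_isUnitDivisor_inclusion (hH : DedekindFiniteM H) {A : PfinOne H}
    (h : IsUnitDivisor (Submonoid.inclusion pfinOne_le_pfinTimes A)) : A = 1 := by
  obtain ⟨B, C, hBC⟩ := h
  exact Subtype.ext (hH.eq_singleton_of_mul_mul_eq_one (congrArg Subtype.val hBC).symm A.2.2)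

theorem PfinOne.exists_lift_of_inclusion_eq_mul (hH : DedekindFiniteM H) {A : PfinOne H}
    {B C : PfinTimes H} (h : Submonoid.inclusion pfinOne_le_pfinTimes A = B * C) :
    ∃ B' C' : PfinOne H, A = B' * C' ∧
      DvdTS B (Submonoid.inclusion pfinOne_le_pfinTimes B') ∧
      DvdTS (Submonoid.inclusion pfinOne_le_pfinTimes B') B ∧
      DvdTS C (Submonoid.inclusion pfinOne_le_pfinTimes C') ∧
      DvdTS (Submonoid.inclusion pfinOne_le_pfinTimes C') C := by
  have hA : (A : Set H) = B * C := congrArg Subtype.val h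
  obtain ⟨β, hβ, γ, hγ, hβγ⟩ := Set.mem_mul.mp (hA ▸ A.2.2)
  set G := PfinTimes.singleton (hH.isUnit_right hβγ)
  set G' := PfinTimes.singleton (hH.isUnit_left hβγ)
  have hGG' : G * G' = 1 :=
    Subtype.ext (by simp [G, G', PfinTimes.singleton, hH β γ hβγ, Set.singleton_one])
  let B' : PfinOne H := ⟨B * G, (B * G).2.1, hβγ ▸ Set.mul_mem_mul hβ rfl⟩
  let C' : PfinOne H := ⟨G' * C, (G' * C).2.1, hβγ ▸ Set.mul_mem_mul rfl hγ⟩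
  refine ⟨B', C', Subtype.ext ?_, dvdTS_mul_right B G, ⟨1, G', ?_⟩, dvdTS_mul_left G' C,
    ⟨G, 1, ?_⟩⟩
  · calc (A : Set H) = ↑(B * C) := hA
      _ = ↑(B * (G * G') * C) := by rw [hGG', mul_one]
      _ = ↑(B * G * (G' * C)) := by simp only [mul_assoc]
  · change B = 1 * (B * G) * G'
    rw [one_mul, mul_assoc, hGG', mul_one]
  · change C = G * (G' * C) * 1
    rw [mul_one, ← mul_assoc, hGG', one_mul]

theorem IsIrredTS.inclusion_pfinOne (hH : DedekindFiniteM H) {A : PfinOne H}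
    (hA : IsIrredTS A) : IsIrredTS (Submonoid.inclusion pfinOne_le_pfinTimes A) :=
  hA.of_lift (Submonoid.inclusion pfinOne_le_pfinTimes)
    (fun h => hA.1 (PfinOne.eq_one_of_isUnitDivisor_inclusion hH h ▸ isUnitDivisor_one))
    (DvdTS.refl _) fun _ _ => PfinOne.exists_lift_of_inclusion_eq_mul hH

end PowerMonoids

/-- if `H` is Dedekind-finite, `u, v` are units of `H` and `A` is irreducible
in `P_{fin,1}(H)`, then `uAv` is irreducible in `P_{fin,×}(H)`. -/
theorem pfinTimes_irreducible_of_pfinOne_irreducible {H : Type*} [Monoid H]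
    (hH : DedekindFiniteM H) (A : PfinOne H) (hA : IsIrredTS A)
    (u v : H) (hu : IsUnit u) (hv : IsUnit v) :
    IsIrredTS (⟨(fun a => u * a * v) '' (A : Set H),
      mem_PfinTimes.mpr ⟨((mem_PfinOne.mp A.2).1).image _,
        u * 1 * v, Set.mem_image_of_mem _ (mem_PfinOne.mp A.2).2,
        by simpa using hu.mul hv⟩⟩ : PfinTimes H) := by
  convert (hA.inclusion_pfinOne hH).mul_mul_of_isUnit (PfinTimes.isUnit_singleton hu)
    (PfinTimes.isUnit_singleton hv) using 1
  exact Subtype.ext (by simp [PfinTimes.singleton, Set.singleton_mul, Set.mul_singleton,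
    Set.image_image, mul_assoc])
end
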